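/- arXiv:2512.22312 — 4 statements merged into one kernel-verified Lean document; each statement's English description precedes it below -/
import Mathlib

section
/- Let V_1, …, V_n be random vectors in ℝ^p (p = p_n ≥ 2 possibly depending on n) with components V_{ij} i.i.d. across i ∈ {1,…,n} and j ∈ {1,…,p}. Suppose that sup_{A∈𝒜^max} |P(n^{−1/2} Σ_{i=1}^n V_i ∈ A) − P(Z ∈ A)| → 0 as n → ∞. Then P(n^{−1/2} Σ_{i=1}^n V_{i1} > √(2 log p − log log p)) / (1 − Φ(√(2 log p − log log p))) → 1 as n → ∞. -/
open MeasureTheory ProbabilityTheory Filter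

noncomputable section

/-- The standard normal cumulative distribution function `Φ`. -/
def stdNormalCDF (t : ℝ) : ℝ := (gaussianReal 0 1 (Set.Iic t)).toReal

/-- `T_n`: the `j`-th component of the normalized sum `n^{-1/2} ∑_{i=1}^n V_i`. -/
def Tn {Ω : Type*} (V : ℕ × ℕ → Ω → ℝ) (n j : ℕ) (ω : Ω) : ℝ :=
  (∑ i ∈ Finset.range n, V (i, j) ω) / Real.sqrt n

/-- `ρ_{n,𝒜^max}`: the supremum over sets `(−∞,t] × ⋯ × (−∞,t]` of
`|P(n^{-1/2} ∑ V_i ∈ A) − P(Z ∈ A)|`, where `Z` is standard Gaussian in `ℝ^p`. -/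
def rhoMax {Ω : Type*} [MeasurableSpace Ω] (P : Measure Ω)
    (V : ℕ × ℕ → Ω → ℝ) (n p : ℕ) : ℝ :=
  ⨆ t : ℝ,
    |(P {ω | ∀ j : Fin p, Tn V n j ω ≤ t}).toReal -
      ((Measure.pi fun _ : Fin p => gaussianReal 0 1) {z | ∀ j : Fin p, z j ≤ t}).toReal|

open Real Set

/-- standard normal density -/
def stdPhi (x : ℝ) : ℝ := (Real.sqrt (2 * Real.pi))⁻¹ * Real.exp (-x ^ 2 / 2)

lemma stdPhi_eq_gaussianPDFReal : gaussianPDFReal 0 1 = stdPhi := by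
  ext x
  simp [gaussianPDFReal, stdPhi]

lemma stdPhi_nonneg (x : ℝ) : 0 ≤ stdPhi x := by
  have h : (0:ℝ) ≤ (Real.sqrt (2 * Real.pi))⁻¹ := by positivity
  exact mul_nonneg h (Real.exp_nonneg _)

lemma integrable_stdPhi : Integrable stdPhi := by
  rw [← stdPhi_eq_gaussianPDFReal]; exact integrable_gaussianPDFReal 0 1

lemma gauss_tail_eq (t : ℝ) :
    (gaussianReal 0 1 (Set.Ioi t)).toReal = ∫ x in Set.Ioi t, stdPhi x := by
  rw [gaussianReal_apply_eq_integral 0 one_ne_zero, stdPhi_eq_gaussianPDFReal,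
    ENNReal.toReal_ofReal]
  exact setIntegral_nonneg measurableSet_Ioi fun x _ => stdPhi_nonneg x

lemma hasDerivAt_negexp (x : ℝ) :
    HasDerivAt (fun y : ℝ => -Real.exp (-y ^ 2 / 2)) (x * Real.exp (-x ^ 2 / 2)) x := by
  have h1 : HasDerivAt (fun y : ℝ => -y ^ 2 / 2) (-x) x := by
    have := ((hasDerivAt_pow 2 x).neg.div_const 2)
    exact this.congr_deriv (by norm_num; ring)
  have h2 := h1.exp
  exact h2.neg.congr_deriv (by ring)

lemma tendsto_exp_negsq : Tendsto (fun x : ℝ => Real.exp (-x ^ 2 / 2)) atTop (nhds 0) := by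
  have h1 : Tendsto (fun x : ℝ => x ^ 2 / 2) atTop atTop :=
    (tendsto_pow_atTop two_ne_zero).atTop_div_const (by norm_num)
  have := Real.tendsto_exp_neg_atTop_nhds_zero.comp h1
  convert this using 2 with x
  simp [Function.comp, neg_div]

lemma integral_x_exp (t : ℝ) (ht : 0 < t) :
    ∫ x in Set.Ioi t, x * Real.exp (-x ^ 2 / 2) = Real.exp (-t ^ 2 / 2) := by
  have := integral_Ioi_of_hasDerivAt_of_nonneg' (g := fun y => -Real.exp (-y ^ 2 / 2))
    (g' := fun x => x * Real.exp (-x ^ 2 / 2)) (a := t) (l := 0)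
    (fun x _ => hasDerivAt_negexp x)
    (fun x hx => mul_nonneg (le_of_lt (lt_trans ht hx)) (Real.exp_nonneg _))
    (by simpa using tendsto_exp_negsq.neg)
  simpa using this

lemma integrableOn_x_exp (t : ℝ) (ht : 0 < t) :
    IntegrableOn (fun x => x * Real.exp (-x ^ 2 / 2)) (Set.Ioi t) := by
  exact integrableOn_Ioi_deriv_of_nonneg' (g := fun y => -Real.exp (-y ^ 2 / 2))
    (fun x _ => hasDerivAt_negexp x)
    (fun x hx => mul_nonneg (le_of_lt (lt_trans ht hx)) (Real.exp_nonneg _))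
    (by simpa using tendsto_exp_negsq.neg)

/-- Upper Mills bound : tail ≤ φ(t)/t. -/
lemma gauss_tail_upper {t : ℝ} (ht : 0 < t) :
    ∫ x in Set.Ioi t, stdPhi x ≤ stdPhi t / t := by
  have key : ∫ x in Set.Ioi t, ((Real.sqrt (2 * Real.pi))⁻¹ / t) * (x * Real.exp (-x ^ 2 / 2))
      = stdPhi t / t := by
    rw [integral_const_mul, integral_x_exp t ht, stdPhi]
    ring
  rw [← key]
  apply setIntegral_mono_on
  · exact integrable_stdPhi.integrableOn
  · exact (integrableOn_x_exp t ht).const_mul _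
  · exact measurableSet_Ioi
  · intro x hx
    have hx1 : t ≤ x := le_of_lt hx
    have h0 : (0:ℝ) ≤ (Real.sqrt (2 * Real.pi))⁻¹ := by positivity
    have : stdPhi x = ((Real.sqrt (2 * Real.pi))⁻¹ / t) * (t * Real.exp (-x ^ 2 / 2)) := by
      rw [stdPhi]; field_simp
    rw [this]
    gcongr

/-- derivative of the lower Mills function. -/
lemma hasDerivAt_millsLower (x : ℝ) :
    HasDerivAt (fun y : ℝ => -(y / (1 + y ^ 2)) * Real.exp (-y ^ 2 / 2))
      (Real.exp (-x ^ 2 / 2) * (x ^ 4 + 2 * x ^ 2 - 1) / (1 + x ^ 2) ^ 2) x := by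
  have hden : (1 : ℝ) + x ^ 2 ≠ 0 := by positivity
  have h1 : HasDerivAt (fun y : ℝ => y / (1 + y ^ 2))
      ((1 * (1 + x ^ 2) - x * (0 + 2 * x ^ 1)) / (1 + x ^ 2) ^ 2) x := by
    exact (hasDerivAt_id x).div ((hasDerivAt_const x 1).add (hasDerivAt_pow 2 x)) hden
  have h2 : HasDerivAt (fun y : ℝ => -y ^ 2 / 2) (-x) x := by
    have := ((hasDerivAt_pow 2 x).neg.div_const 2)
    exact this.congr_deriv (by norm_num; ring)
  have h3 := (h1.neg).mul h2.exp
  exact h3.congr_deriv (by simp only [Pi.neg_apply]; field_simp; ring)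

lemma tendsto_millsLower :
    Tendsto (fun y : ℝ => -(y / (1 + y ^ 2)) * Real.exp (-y ^ 2 / 2)) atTop (nhds 0) := by
  have hb : ∀ᶠ y : ℝ in atTop, |(-(y / (1 + y ^ 2)) * Real.exp (-y ^ 2 / 2)) - 0|
      ≤ Real.exp (-y ^ 2 / 2) := by
    filter_upwards [eventually_ge_atTop (0:ℝ)] with y hy
    rw [sub_zero, abs_mul, abs_neg]
    have h1 : |y / (1 + y ^ 2)| ≤ 1 := by
      rw [abs_div, abs_of_nonneg hy, abs_of_pos (by positivity : (0:ℝ) < 1 + y ^ 2)]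
      rw [div_le_one (by positivity)]
      nlinarith
    calc |y / (1 + y ^ 2)| * |Real.exp (-y ^ 2 / 2)| ≤ 1 * |Real.exp (-y ^ 2 / 2)| := by
          gcongr
      _ = Real.exp (-y ^ 2 / 2) := by rw [one_mul, abs_of_pos (Real.exp_pos _)]
  rw [tendsto_iff_dist_tendsto_zero]
  simp only [Real.dist_eq]
  exact squeeze_zero' (Eventually.of_forall fun y => abs_nonneg _) hb tendsto_exp_negsq

/-- Lower Mills bound: φ(t)·t/(1+t²) ≤ tail, for t ≥ 1. -/
lemma gauss_tail_lower {t : ℝ} (ht : 1 ≤ t) :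
    stdPhi t * (t / (1 + t ^ 2)) ≤ ∫ x in Set.Ioi t, stdPhi x := by
  have ht0 : (0:ℝ) < t := lt_of_lt_of_le one_pos ht
  have hpos : ∀ x ∈ Set.Ioi t, 0 ≤ Real.exp (-x ^ 2 / 2) * (x ^ 4 + 2 * x ^ 2 - 1) / (1 + x ^ 2) ^ 2 := by
    intro x hx
    have hx1 : 1 ≤ x := le_trans ht (le_of_lt hx)
    have : (0:ℝ) ≤ x ^ 4 + 2 * x ^ 2 - 1 := by nlinarith
    positivity
  have key : ∫ x in Set.Ioi t, Real.exp (-x ^ 2 / 2) * (x ^ 4 + 2 * x ^ 2 - 1) / (1 + x ^ 2) ^ 2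
      = t / (1 + t ^ 2) * Real.exp (-t ^ 2 / 2) := by
    have := integral_Ioi_of_hasDerivAt_of_nonneg' (a := t) (l := 0)
      (fun x _ => hasDerivAt_millsLower x) hpos tendsto_millsLower
    rw [this]; ring
  have hint : IntegrableOn (fun x => Real.exp (-x ^ 2 / 2) * (x ^ 4 + 2 * x ^ 2 - 1) / (1 + x ^ 2) ^ 2) (Set.Ioi t) :=
    integrableOn_Ioi_deriv_of_nonneg' (fun x _ => hasDerivAt_millsLower x) hpos tendsto_millsLower
  have cmp : ∫ x in Set.Ioi t, (Real.sqrt (2 * Real.pi))⁻¹ *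
        (Real.exp (-x ^ 2 / 2) * (x ^ 4 + 2 * x ^ 2 - 1) / (1 + x ^ 2) ^ 2)
      ≤ ∫ x in Set.Ioi t, stdPhi x := by
    apply setIntegral_mono_on
    · exact hint.const_mul _
    · exact integrable_stdPhi.integrableOn
    · exact measurableSet_Ioi
    · intro x hx
      rw [stdPhi]
      have h0 : (0:ℝ) ≤ (Real.sqrt (2 * Real.pi))⁻¹ := by positivity
      gcongr
      rw [div_le_iff₀ (by positivity)]
      nlinarith [Real.exp_nonneg (-x ^ 2 / 2), sq_nonneg (x^2), sq_nonneg x]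
  calc stdPhi t * (t / (1 + t ^ 2))
      = (Real.sqrt (2 * Real.pi))⁻¹ * (t / (1 + t ^ 2) * Real.exp (-t ^ 2 / 2)) := by
        rw [stdPhi]; ring
    _ = ∫ x in Set.Ioi t, (Real.sqrt (2 * Real.pi))⁻¹ *
        (Real.exp (-x ^ 2 / 2) * (x ^ 4 + 2 * x ^ 2 - 1) / (1 + x ^ 2) ^ 2) := by
        rw [integral_const_mul, key]
    _ ≤ _ := cmp

section numeric
variable {N : ℕ} (hN : 2 ≤ N)

lemma L_bounds (hN : 2 ≤ N) : (2/3 : ℝ) ≤ Real.log N := by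
  have h2 : (2:ℝ) ≤ (N:ℝ) := by exact_mod_cast hN
  have := Real.log_le_log (by norm_num) h2
  have hl2 := Real.log_two_gt_d9
  linarith

lemma logL_ge (hN : 2 ≤ N) : (-1 : ℝ) ≤ Real.log (Real.log N) := by
  have hL := L_bounds hN
  have h1 : Real.exp (-1) ≤ Real.log N := by
    have he := Real.exp_one_gt_d9
    have : Real.exp (-1) = (Real.exp 1)⁻¹ := by rw [Real.exp_neg]
    rw [this]
    have : (Real.exp 1)⁻¹ ≤ (2.7182818283:ℝ)⁻¹ := by
      apply inv_anti₀ (by norm_num) (le_of_lt he)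
    nlinarith
  calc (-1:ℝ) = Real.log (Real.exp (-1)) := (Real.log_exp _).symm
    _ ≤ Real.log (Real.log N) := Real.log_le_log (Real.exp_pos _) h1

lemma logL_le (hN : 2 ≤ N) : Real.log (Real.log N) ≤ Real.log N - 1 :=
  Real.log_le_sub_one_of_pos (by linarith [L_bounds hN])

lemma tsq_eq (hN : 2 ≤ N) :
    (Real.sqrt (2 * Real.log N - Real.log (Real.log N))) ^ 2
      = 2 * Real.log N - Real.log (Real.log N) := by
  apply Real.sq_sqrt
  linarith [L_bounds hN, logL_le hN]

lemma t_ge_one (hN : 2 ≤ N) : 1 ≤ Real.sqrt (2 * Real.log N - Real.log (Real.log N)) := by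
  have h2 := tsq_eq hN
  have h3 := logL_le hN
  have h4 := L_bounds hN
  have h5 := Real.sqrt_nonneg (2 * Real.log N - Real.log (Real.log N))
  nlinarith

lemma stdPhi_t_eq (hN : 2 ≤ N) :
    stdPhi (Real.sqrt (2 * Real.log N - Real.log (Real.log N)))
      = (Real.sqrt (2 * Real.pi))⁻¹ * Real.sqrt (Real.log N) / N := by
  have hL : (0:ℝ) < Real.log N := by linarith [L_bounds hN]
  have hN0 : (0:ℝ) < N := by positivity
  rw [stdPhi, tsq_eq hN]
  have h1 : -(2 * Real.log N - Real.log (Real.log N)) / 2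
      = -Real.log N + Real.log (Real.log N) / 2 := by ring
  rw [h1, Real.exp_add, Real.exp_half, Real.exp_log hL, Real.exp_neg, Real.exp_log hN0]
  ring


end numeric


lemma one_sub_cdf (t : ℝ) : 1 - stdNormalCDF t = ∫ x in Set.Ioi t, stdPhi x := by
  have h := measure_add_measure_compl (μ := gaussianReal 0 1) (measurableSet_Iic (a := t))
  rw [compl_Iic, measure_univ] at h
  have h1 : (gaussianReal 0 1 (Set.Iic t)).toReal + (gaussianReal 0 1 (Set.Ioi t)).toReal = 1 := by
    rw [← ENNReal.toReal_add (measure_ne_top _ _) (measure_ne_top _ _), h, ENNReal.toReal_one]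
  rw [← gauss_tail_eq, stdNormalCDF]
  linarith

section numeric2
variable {N : ℕ}

lemma Nq_upper (hN : 2 ≤ N) :
    (N : ℝ) * (1 - stdNormalCDF (Real.sqrt (2 * Real.log N - Real.log (Real.log N)))) ≤ 2/5 := by
  set t := Real.sqrt (2 * Real.log N - Real.log (Real.log N)) with ht_def
  have ht1 : 1 ≤ t := t_ge_one hN
  have ht0 : 0 < t := by linarith
  have hL : (2/3:ℝ) ≤ Real.log N := L_bounds hN
  have hsL : Real.sqrt (Real.log N) ≤ t := by
    apply Real.sqrt_le_sqrt
    linarith [logL_le hN]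
  have hsL0 : 0 < Real.sqrt (Real.log N) := Real.sqrt_pos.mpr (by linarith)
  have hN0 : (0:ℝ) < N := by positivity
  rw [one_sub_cdf]
  have h1 : ∫ x in Set.Ioi t, stdPhi x ≤ stdPhi t / t := gauss_tail_upper ht0
  have h2 : stdPhi t / t ≤ stdPhi t / Real.sqrt (Real.log N) := by
    apply div_le_div_of_nonneg_left _ hsL0 hsL
    rw [stdPhi_t_eq hN]
    positivity
  have h3 : stdPhi t / Real.sqrt (Real.log N) = (Real.sqrt (2 * Real.pi))⁻¹ / N := by
    rw [stdPhi_t_eq hN]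
    field_simp
  have h4 : (Real.sqrt (2 * Real.pi))⁻¹ ≤ 2/5 := by
    rw [inv_le_comm₀ (by positivity) (by norm_num)]
    rw [show (2/5:ℝ)⁻¹ = 5/2 by norm_num]
    rw [Real.le_sqrt (by norm_num) (by positivity)]
    nlinarith [Real.pi_gt_d6]
  calc (N:ℝ) * ∫ x in Set.Ioi t, stdPhi x ≤ (N:ℝ) * ((Real.sqrt (2 * Real.pi))⁻¹ / N) := by
        have := le_trans h1 (le_trans h2 (le_of_eq h3))
        exact mul_le_mul_of_nonneg_left this (le_of_lt hN0)
    _ = (Real.sqrt (2 * Real.pi))⁻¹ := by field_simp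
    _ ≤ 2/5 := h4

lemma Nq_lower (hN : 2 ≤ N) :
    1/10 ≤ (N : ℝ) * (1 - stdNormalCDF (Real.sqrt (2 * Real.log N - Real.log (Real.log N)))) := by
  set t := Real.sqrt (2 * Real.log N - Real.log (Real.log N)) with ht_def
  have ht1 : 1 ≤ t := t_ge_one hN
  have hL : (2/3:ℝ) ≤ Real.log N := L_bounds hN
  have hL0 : (0:ℝ) < Real.log N := by linarith
  set s := Real.sqrt (Real.log N) with hs_def
  set v := Real.sqrt (Real.log N + 1) with hv_def
  set c := Real.sqrt (2 * Real.pi) with hc_def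
  have hs2 : s ^ 2 = Real.log N := Real.sq_sqrt (le_of_lt hL0)
  have hv2 : v ^ 2 = Real.log N + 1 := Real.sq_sqrt (by linarith)
  have hc2 : c ^ 2 = 2 * Real.pi := Real.sq_sqrt (by positivity)
  have hs0 : 0 < s := Real.sqrt_pos.mpr hL0
  have hv0 : 0 < v := Real.sqrt_pos.mpr (by linarith)
  have hc0 : 0 < c := Real.sqrt_pos.mpr (by positivity)
  have ht2 : t ^ 2 = 2 * Real.log N - Real.log (Real.log N) := tsq_eq hN
  have htv : v ≤ t := by
    rw [ht_def, hv_def]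
    apply Real.sqrt_le_sqrt
    linarith [logL_le hN]
  have ht2hi : t ^ 2 ≤ 2 * Real.log N + 1 := by
    rw [ht2]; linarith [logL_ge hN]
  have hpi_hi : Real.pi ≤ 3.141593 := le_of_lt Real.pi_lt_d6
  have h10s : 2 * c * v ≤ 10 * s := by
    have hsq : (2 * c * v) ^ 2 ≤ (10 * s) ^ 2 := by
      have : (2*c*v)^2 = 4 * (2*Real.pi) * (Real.log N + 1) := by
        rw [mul_pow, mul_pow, hc2, hv2]; ring
      rw [this]
      have : (10*s)^2 = 100 * Real.log N := by rw [mul_pow, hs2]; ring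
      rw [this]
      nlinarith
    nlinarith [mul_pos (mul_pos two_pos hc0) hv0]
  have hN0 : (0:ℝ) < N := by positivity
  rw [one_sub_cdf]
  have hlow : stdPhi t * (t / (1 + t ^ 2)) ≤ ∫ x in Set.Ioi t, stdPhi x := gauss_tail_lower ht1
  have hphi : stdPhi t = c⁻¹ * s / N := stdPhi_t_eq hN
  have key : 1/10 ≤ (N:ℝ) * (stdPhi t * (t / (1 + t ^ 2))) := by
    rw [hphi]
    have hEq : (N:ℝ) * (c⁻¹ * s / N * (t / (1 + t ^ 2))) = (s * t) / (c * (1 + t ^ 2)) := by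
      field_simp
    rw [hEq, le_div_iff₀ (by positivity)]
    have ht0 : (0:ℝ) < t := by linarith
    nlinarith [mul_le_mul_of_nonneg_left htv (le_of_lt hs0),
      mul_le_mul_of_nonneg_right h10s (le_of_lt hv0),
      mul_le_mul_of_nonneg_left ht2hi (le_of_lt hc0)]
  calc (1:ℝ)/10 ≤ (N:ℝ) * (stdPhi t * (t / (1 + t ^ 2))) := key
    _ ≤ (N:ℝ) * ∫ x in Set.Ioi t, stdPhi x := mul_le_mul_of_nonneg_left hlow (le_of_lt hN0)

end numeric2

section prob
variable {Ω : Type*} [MeasurableSpace Ω] (P : Measure Ω) [IsProbabilityMeasure P]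
  (μ : Measure ℝ) [IsProbabilityMeasure μ] (V : ℕ × ℕ → Ω → ℝ)

lemma sum_identDistrib (hmeas : ∀ ij, Measurable (V ij))
    (hindep : iIndepFun V P)
    (hlaw : ∀ ij, Measure.map (V ij) P = μ) (n j k : ℕ) :
    IdentDistrib (fun ω => ∑ i ∈ Finset.range n, V (i, j) ω)
      (fun ω => ∑ i ∈ Finset.range n, V (i, k) ω) P P := by
  induction n with
  | zero =>
    simp only [Finset.range_zero, Finset.sum_empty]
    exact IdentDistrib.refl aemeasurable_const
  | succ n ih =>
    simp only [Finset.sum_range_succ]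
    have hmX : ∀ l : ℕ, Measurable (fun ω => ∑ i ∈ Finset.range n, V (i, l) ω) :=
      fun l => Finset.measurable_sum _ (fun i _ => hmeas _)
    have hindepX : ∀ l : ℕ, IndepFun (fun ω => ∑ i ∈ Finset.range n, V (i, l) ω) (V (n, l)) P := by
      intro l
      have hnot : (n, l) ∉ (Finset.range n).image (fun i => (i, l)) := by
        simp
      have h := hindep.indepFun_finsetSum_of_notMem hmeas hnot
      have heq : (∑ q ∈ (Finset.range n).image (fun i => (i, l)), V q)
          = (fun ω => ∑ i ∈ Finset.range n, V (i, l) ω) := by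
        funext ω
        rw [Finset.sum_apply, Finset.sum_image (by intro a _ b _ h; simpa using h)]
      rwa [heq] at h
    have hmap : ∀ l : ℕ, Measure.map (fun ω => ((∑ i ∈ Finset.range n, V (i, l) ω), V (n, l) ω)) P
        = (Measure.map (fun ω => ∑ i ∈ Finset.range n, V (i, l) ω) P).prod μ := by
      intro l
      rw [← hlaw (n, l)]
      exact (indepFun_iff_map_prod_eq_prod_map_map (hmX l).aemeasurable
        (hmeas (n, l)).aemeasurable).mp (hindepX l)
    refine ⟨((hmX j).add (hmeas (n, j))).aemeasurable, ((hmX k).add (hmeas (n, k))).aemeasurable, ?_⟩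
    have hcomp : ∀ l : ℕ, (fun ω => (∑ i ∈ Finset.range n, V (i, l) ω) + V (n, l) ω)
        = (fun q : ℝ × ℝ => q.1 + q.2) ∘ (fun ω => ((∑ i ∈ Finset.range n, V (i, l) ω), V (n, l) ω)) :=
      fun l => rfl
    rw [hcomp j, hcomp k,
      ← Measure.map_map measurable_add ((hmX j).prodMk (hmeas (n, j))),
      ← Measure.map_map measurable_add ((hmX k).prodMk (hmeas (n, k))),
      hmap j, hmap k, ih.map_eq]

lemma prob_factorization (hmeas : ∀ ij, Measurable (V ij))
    (hindep : iIndepFun V P) (n : ℕ) (s : ℝ) :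
    ∀ m : ℕ, P {ω | ∀ j < m, (∑ i ∈ Finset.range n, V (i, j) ω) ≤ s}
      = ∏ j ∈ Finset.range m, P {ω | (∑ i ∈ Finset.range n, V (i, j) ω) ≤ s} := by
  intro m
  induction m with
  | zero => simp
  | succ m ih =>
    classical
    have hsplit : {ω | ∀ j < m + 1, (∑ i ∈ Finset.range n, V (i, j) ω) ≤ s}
        = {ω | ∀ j < m, (∑ i ∈ Finset.range n, V (i, j) ω) ≤ s}
          ∩ {ω | (∑ i ∈ Finset.range n, V (i, m) ω) ≤ s} := by
      ext ω
      simp only [Set.mem_setOf_eq, Set.mem_inter_iff, Nat.lt_succ_iff_lt_or_eq]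
      constructor
      · exact fun h => ⟨fun j hj => h j (Or.inl hj), h m (Or.inr rfl)⟩
      · rintro ⟨h1, h2⟩ j (hj | rfl)
        · exact h1 j hj
        · exact h2
    set SS : Finset (ℕ × ℕ) := (Finset.range n) ×ˢ (Finset.range m) with hSS
    set TT : Finset (ℕ × ℕ) := (Finset.range n) ×ˢ {m} with hTT
    have hdisj : Disjoint SS TT := by
      rw [Finset.disjoint_left]
      rintro ⟨i, j⟩ hS hT
      simp only [hSS, hTT, Finset.mem_product, Finset.mem_range, Finset.mem_singleton] at hS hT
      omega
    have hIF := hindep.indepFun_finset SS TT hdisj hmeas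
    -- the coordinate-summing functions on the product spaces
    set gA : ℕ → ((q : SS) → ℝ) → ℝ :=
      fun j v => ∑ q ∈ SS.attach, if (q : ℕ × ℕ).2 = j then v q else 0 with hgA
    set gB : ((q : TT) → ℝ) → ℝ := fun v => ∑ q ∈ TT.attach, v q with hgB
    have hgAm : ∀ j, Measurable (gA j) := by
      intro j
      apply Finset.measurable_sum
      intro q _
      by_cases h : (q : ℕ × ℕ).2 = j
      · simp only [if_pos h]; exact measurable_pi_apply q
      · simp only [if_neg h]; exact measurable_const
    have hgBm : Measurable gB := Finset.measurable_sum _ (fun q _ => measurable_pi_apply q)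
    set sA : Set ((q : SS) → ℝ) := ⋂ j ∈ Set.Iio m, {v | gA j v ≤ s} with hsA
    set sB : Set ((q : TT) → ℝ) := {v | gB v ≤ s} with hsB
    have hsAm : MeasurableSet sA :=
      MeasurableSet.biInter (Set.to_countable _)
        (fun j _ => measurableSet_le (hgAm j) measurable_const)
    have hsBm : MeasurableSet sB := measurableSet_le hgBm measurable_const
    have hgAeval : ∀ (j : ℕ), j < m → ∀ ω, gA j (fun q : SS => V (q : ℕ × ℕ) ω)
        = ∑ i ∈ Finset.range n, V (i, j) ω := by
      intro j hj ω
      rw [hgA]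
      simp only
      rw [Finset.sum_attach SS (fun x => if x.2 = j then V x ω else 0), hSS,
        Finset.sum_product]
      apply Finset.sum_congr rfl
      intro i _
      rw [Finset.sum_ite_eq' (Finset.range m) j (fun j' => V (i, j') ω)]
      simp [hj]
    have hgBeval : ∀ ω, gB (fun q : TT => V (q : ℕ × ℕ) ω)
        = ∑ i ∈ Finset.range n, V (i, m) ω := by
      intro ω
      rw [hgB]
      simp only
      rw [Finset.sum_attach TT (fun x => V x ω), hTT, Finset.sum_product]
      simp
    have hpreA : (fun a (q : SS) => V (q : ℕ × ℕ) a) ⁻¹' sA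
        = {ω | ∀ j < m, (∑ i ∈ Finset.range n, V (i, j) ω) ≤ s} := by
      ext a
      simp only [hsA, Set.mem_preimage, Set.mem_iInter, Set.mem_setOf_eq, Set.mem_Iio]
      constructor
      · intro h j hj; rw [← hgAeval j hj a]; exact h j hj
      · intro h j hj; rw [hgAeval j hj a]; exact h j hj
    have hpreB : (fun a (q : TT) => V (q : ℕ × ℕ) a) ⁻¹' sB
        = {ω | (∑ i ∈ Finset.range n, V (i, m) ω) ≤ s} := by
      ext a
      simp only [hsB, Set.mem_preimage, Set.mem_setOf_eq]
      rw [hgBeval a]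
    have hmul := hIF.measure_inter_preimage_eq_mul sA sB hsAm hsBm
    rw [hpreA, hpreB] at hmul
    rw [hsplit, hmul, ih, Finset.prod_range_succ]

end prob

lemma toReal_prob_le_one {α : Type*} [MeasurableSpace α] (Q : Measure α)
    [IsProbabilityMeasure Q] (A : Set α) : (Q A).toReal ≤ 1 := by
  have h := prob_le_one (μ := Q) (s := A)
  calc (Q A).toReal ≤ (1 : ENNReal).toReal := ENNReal.toReal_mono ENNReal.one_ne_top h
    _ = 1 := ENNReal.toReal_one

lemma rhoMax_bound {Ω : Type*} [MeasurableSpace Ω] (P : Measure Ω) [IsProbabilityMeasure P]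
    (V : ℕ × ℕ → Ω → ℝ) (n N : ℕ) (t : ℝ) :
    |(P {ω | ∀ j : Fin N, Tn V n j ω ≤ t}).toReal -
      ((Measure.pi fun _ : Fin N => gaussianReal 0 1) {z | ∀ j : Fin N, z j ≤ t}).toReal|
      ≤ rhoMax P V n N := by
  apply le_ciSup (f := fun t : ℝ =>
    |(P {ω | ∀ j : Fin N, Tn V n j ω ≤ t}).toReal -
      ((Measure.pi fun _ : Fin N => gaussianReal 0 1) {z | ∀ j : Fin N, z j ≤ t}).toReal|)
  refine ⟨1, ?_⟩
  rintro x ⟨u, rfl⟩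
  have h1 := toReal_prob_le_one P {ω | ∀ j : Fin N, Tn V n j ω ≤ u}
  have h2 := toReal_prob_le_one (Measure.pi fun _ : Fin N => gaussianReal 0 1)
    {z | ∀ j : Fin N, z j ≤ u}
  have h3 : (0:ℝ) ≤ (P {ω | ∀ j : Fin N, Tn V n j ω ≤ u}).toReal := ENNReal.toReal_nonneg
  have h4 : (0:ℝ) ≤ ((Measure.pi fun _ : Fin N => gaussianReal 0 1)
    {z | ∀ j : Fin N, z j ≤ u}).toReal := ENNReal.toReal_nonneg
  rw [abs_le]
  constructor <;> linarith

set_option maxHeartbeats 1000000 in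
lemma main_estimate {Ω : Type*} [MeasurableSpace Ω] (P : Measure Ω) [IsProbabilityMeasure P]
    (μ : Measure ℝ) [IsProbabilityMeasure μ] (V : ℕ × ℕ → Ω → ℝ)
    (hmeas : ∀ ij, Measurable (V ij))
    (hindep : iIndepFun V P)
    (hlaw : ∀ ij, Measure.map (V ij) P = μ)
    (n N : ℕ) (hn : 1 ≤ n) (hN : 2 ≤ N)
    (hrho : rhoMax P V n N ≤ 1/10) :
    |(P {ω | Real.sqrt (2 * Real.log N - Real.log (Real.log N)) < Tn V n 0 ω}).toReal /
      (1 - stdNormalCDF (Real.sqrt (2 * Real.log N - Real.log (Real.log N)))) - 1|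
      ≤ 20 * rhoMax P V n N := by
  set t := Real.sqrt (2 * Real.log N - Real.log (Real.log N)) with ht_def
  set ρ := rhoMax P V n N with hρ_def
  have hρ0 : 0 ≤ ρ := le_trans (abs_nonneg _) (rhoMax_bound P V n N 0)
  have hn0 : (0:ℝ) < n := by exact_mod_cast hn
  have hsn : (0:ℝ) < Real.sqrt n := Real.sqrt_pos.mpr hn0
  set s := t * Real.sqrt n with hs_def
  have hTn_iff : ∀ (j : ℕ) (ω : Ω), (Tn V n j ω ≤ t ↔ (∑ i ∈ Finset.range n, V (i, j) ω) ≤ s) := by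
    intro j ω
    rw [Tn, div_le_iff₀ hsn]
  set F := (P {ω | (∑ i ∈ Finset.range n, V (i, 0) ω) ≤ s}).toReal with hF_def
  set y := stdNormalCDF t with hy_def
  set q := 1 - y with hq_def
  have hN0 : (0:ℝ) < N := by
    have : (2:ℝ) ≤ N := by exact_mod_cast hN
    linarith
  -- rectangle probability for P
  have hrect : (P {ω | ∀ j : Fin N, Tn V n j ω ≤ t}).toReal = F ^ N := by
    have hset : {ω | ∀ j : Fin N, Tn V n (j:ℕ) ω ≤ t}
        = {ω | ∀ j < N, (∑ i ∈ Finset.range n, V (i, j) ω) ≤ s} := by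
      ext ω
      simp only [Set.mem_setOf_eq]
      constructor
      · intro h j hj; exact (hTn_iff j ω).mp (h ⟨j, hj⟩)
      · intro h j; exact (hTn_iff j ω).mpr (h j j.isLt)
    rw [hset, prob_factorization P V hmeas hindep n s N]
    have heach : ∀ j ∈ Finset.range N,
        P {ω | (∑ i ∈ Finset.range n, V (i, j) ω) ≤ s}
          = P {ω | (∑ i ∈ Finset.range n, V (i, 0) ω) ≤ s} := by
      intro j _
      have hid := sum_identDistrib P μ V hmeas hindep hlaw n j 0
      exact hid.measure_mem_eq (s := Set.Iic s) measurableSet_Iic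
    rw [Finset.prod_congr rfl heach, Finset.prod_const, Finset.card_range, ENNReal.toReal_pow]
  -- rectangle probability for the Gaussian
  have hgauss : ((Measure.pi fun _ : Fin N => gaussianReal 0 1)
      {z | ∀ j : Fin N, z j ≤ t}).toReal = y ^ N := by
    have hset : {z : Fin N → ℝ | ∀ j : Fin N, z j ≤ t}
        = Set.pi Set.univ (fun _ : Fin N => Set.Iic t) := by
      ext z
      simp only [Set.mem_setOf_eq, Set.mem_pi, Set.mem_Iic]
      exact ⟨fun h j _ => h j, fun h j => h j (Set.mem_univ j)⟩
    rw [hset, Measure.pi_pi, Finset.prod_const, Finset.card_univ, Fintype.card_fin,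
      ENNReal.toReal_pow]
    rfl
  have hkey : |F ^ N - y ^ N| ≤ ρ := by
    have h := rhoMax_bound P V n N t
    rw [hrect, hgauss] at h
    exact h
  -- numeric bounds
  have hc_lo : 1/10 ≤ (N:ℝ) * q := Nq_lower hN
  have hc_hi : (N:ℝ) * q ≤ 2/5 := Nq_upper hN
  have hq0 : 0 < q := by nlinarith
  have hy0 : 0 ≤ y := ENNReal.toReal_nonneg
  have hy1 : y ≤ 1 := toReal_prob_le_one (gaussianReal 0 1) (Set.Iic t)
  have hF0 : 0 ≤ F := ENNReal.toReal_nonneg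
  have hF1 : F ≤ 1 := toReal_prob_le_one P _
  -- complement probability
  have hcompl : (P {ω | t < Tn V n 0 ω}).toReal = 1 - F := by
    have hset : {ω | t < Tn V n 0 ω} = {ω | (∑ i ∈ Finset.range n, V (i, 0) ω) ≤ s}ᶜ := by
      ext ω
      simp only [Set.mem_compl_iff, Set.mem_setOf_eq, ← hTn_iff 0 ω, not_le]
    have hmS : MeasurableSet {ω | (∑ i ∈ Finset.range n, V (i, 0) ω) ≤ s} :=
      measurableSet_le (Finset.measurable_sum _ fun i _ => hmeas _) measurable_const
    rw [hset, measure_compl hmS (measure_ne_top _ _), measure_univ,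
      ENNReal.toReal_sub_of_le prob_le_one ENNReal.one_ne_top, ENNReal.toReal_one]
  rw [hcompl]
  clear_value F y ρ
  have hqN : q ≤ 2 / (5 * N) := by
    rw [le_div_iff₀ (by positivity)]
    nlinarith
  have hyN : (3:ℝ)/5 ≤ y ^ N := by
    have h := one_add_mul_le_pow (a := -q) (by nlinarith) N
    have he : (1:ℝ) + -q = y := by rw [hq_def]; ring
    rw [he] at h
    nlinarith
  have hFN : (1:ℝ)/2 ≤ F ^ N := by
    have h := abs_le.mp hkey
    nlinarith [h.1]
  set m := min F y with hm_def
  have hm0 : 0 ≤ m := le_min hF0 hy0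
  have hm1 : m ≤ 1 := le_trans (min_le_left _ _) hF1
  have hmN : (1:ℝ)/2 ≤ m ^ N := by
    rcases le_total F y with h | h
    · rw [hm_def, min_eq_left h]; linarith
    · rw [hm_def, min_eq_right h]; linarith
  have hmN1 : (1:ℝ)/2 ≤ m ^ (N - 1) := by
    have := pow_le_pow_of_le_one hm0 hm1 (Nat.sub_le N 1)
    linarith
  have hsum : (N:ℝ) * (1/2) ≤ ∑ i ∈ Finset.range N, F ^ i * y ^ (N - 1 - i) := by
    have h1 : (N:ℝ) * (1/2) = ∑ _i ∈ Finset.range N, (1/2 : ℝ) := by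
      rw [Finset.sum_const, Finset.card_range]; ring
    rw [h1]
    apply Finset.sum_le_sum
    intro i hi
    have hiN : i < N := Finset.mem_range.mp hi
    have hsplit : i + (N - 1 - i) = N - 1 := by omega
    calc (1/2 : ℝ) ≤ m ^ (N - 1) := hmN1
      _ = m ^ i * m ^ (N - 1 - i) := by rw [← pow_add, hsplit]
      _ ≤ F ^ i * y ^ (N - 1 - i) := by
          apply mul_le_mul
          · exact pow_le_pow_left₀ hm0 (min_le_left _ _) i
          · exact pow_le_pow_left₀ hm0 (min_le_right _ _) _
          · positivity
          · positivity
  have habs : |F - y| * ((N:ℝ) * (1/2)) ≤ ρ := by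
    have hgs := geom_sum₂_mul F y N
    have heq : |F ^ N - y ^ N| = (∑ i ∈ Finset.range N, F ^ i * y ^ (N - 1 - i)) * |F - y| := by
      rw [← hgs, abs_mul]
      congr 1
      rw [abs_of_nonneg]
      apply Finset.sum_nonneg
      intro i _
      positivity
    calc |F - y| * ((N:ℝ) * (1/2))
        ≤ |F - y| * (∑ i ∈ Finset.range N, F ^ i * y ^ (N - 1 - i)) :=
          mul_le_mul_of_nonneg_left hsum (abs_nonneg _)
      _ = (∑ i ∈ Finset.range N, F ^ i * y ^ (N - 1 - i)) * |F - y| := mul_comm _ _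
      _ = |F ^ N - y ^ N| := heq.symm
      _ ≤ ρ := hkey
  have hFy : |F - y| ≤ 2 * ρ / N := by
    rw [le_div_iff₀ hN0]
    nlinarith [abs_nonneg (F - y)]
  have hrw : (1 - F) / q - 1 = (y - F) / q := by
    field_simp
    rw [hq_def]
    ring
  rw [hrw, abs_div, abs_of_pos hq0, div_le_iff₀ hq0]
  calc |y - F| = |F - y| := abs_sub_comm y F
    _ ≤ 2 * ρ / N := hFy
    _ ≤ 20 * ρ * q := by
        rw [div_le_iff₀ hN0]
        nlinarith [mul_nonneg hρ0 (by linarith : (0:ℝ) ≤ (N:ℝ) * q - 1/10)]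


/-- **Lemma 2 (zones of normal attraction).**
Let `V_{ij}`, `(i,j) ∈ ℕ × ℕ`, be an i.i.d. array of real random variables and let
`p_n ≥ 2` be a sequence of dimensions.  If
`sup_{A∈𝒜^max} |P(n^{−1/2} ∑_{i=1}^n V_i ∈ A) − P(Z ∈ A)| → 0` as `n → ∞`, then
`P(n^{−1/2} ∑_{i=1}^n V_{i1} > √(2 log p − log log p)) / (1 − Φ(√(2 log p − log log p)))`
tends to `1` as `n → ∞`. -/
theorem zones_of_normal_attraction
    {Ω : Type*} [MeasurableSpace Ω] (P : Measure Ω) [IsProbabilityMeasure P]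
    (μ : Measure ℝ) [IsProbabilityMeasure μ]
    (V : ℕ × ℕ → Ω → ℝ)
    (hmeas : ∀ ij, Measurable (V ij))
    (hindep : iIndepFun V P)
    (hlaw : ∀ ij, Measure.map (V ij) P = μ)
    (p : ℕ → ℕ) (hp : ∀ n : ℕ, 1 ≤ n → 2 ≤ p n)
    (hconv : Tendsto (fun n => rhoMax P V n (p n)) atTop (nhds 0)) :
    Tendsto (fun n =>
      (P {ω | Real.sqrt (2 * Real.log (p n) - Real.log (Real.log (p n))) <
          Tn V n 0 ω}).toReal /
        (1 - stdNormalCDF (Real.sqrt (2 * Real.log (p n) - Real.log (Real.log (p n))))))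
      atTop (nhds 1) := by
  have hev1 : ∀ᶠ n in atTop, rhoMax P V n (p n) ≤ 1/10 :=
    hconv.eventually (eventually_le_nhds (by norm_num))
  have hev : ∀ᶠ n in atTop,
      |(P {ω | Real.sqrt (2 * Real.log (p n) - Real.log (Real.log (p n))) <
          Tn V n 0 ω}).toReal /
        (1 - stdNormalCDF (Real.sqrt (2 * Real.log (p n) - Real.log (Real.log (p n))))) - 1|
        ≤ 20 * rhoMax P V n (p n) := by
    filter_upwards [hev1, eventually_ge_atTop 1] with n h1 h2
    exact main_estimate P μ V hmeas hindep hlaw n (p n) h2 (hp n h2) h1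
  rw [tendsto_iff_dist_tendsto_zero]
  simp only [Real.dist_eq]
  apply squeeze_zero' (Eventually.of_forall fun n => abs_nonneg _) hev
  have h20 := hconv.const_mul (20:ℝ)
  simpa using h20


end
end

section
/- Let X be a real random variable with E X² < ∞ whose tail satisfies F̄(x) = x^{−2} e^{−g(x)} (1 + o(1)) as x → ∞, where g is a positive increasing differentiable function on [0,∞) with g(x) → ∞ and x g′(x) → 0 as x → ∞, and such that for some β₁ > 1, g(x) ≥ β₁ log log x for all sufficiently large x. Then E[X² 1(|X| > x)] = o(1/g(x)) as x → ∞; equivalently, g(x) · E[X² 1(|X| > x)] → 0 as x → ∞. -/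
open MeasureTheory ProbabilityTheory Filter

lemma my_mul_exp_antitone {b s : ℝ} (hb : 1 ≤ b) (hbs : b ≤ s) :
    s * Real.exp (-s) ≤ b * Real.exp (-b) := by
  have h1 : s - b + 1 ≤ Real.exp (s - b) := Real.add_one_le_exp _
  have h2 : Real.exp (-b) = Real.exp (-s) * Real.exp (s - b) := by
    rw [← Real.exp_add]; ring_nf
  have h3 : (0:ℝ) < Real.exp (-s) := Real.exp_pos _
  have h4 : s ≤ b * Real.exp (s - b) := by
    nlinarith [mul_le_mul_of_nonneg_left h1 (by linarith : (0:ℝ) ≤ b)]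
  calc s * Real.exp (-s) ≤ (b * Real.exp (s - b)) * Real.exp (-s) :=
        mul_le_mul_of_nonneg_right h4 h3.le
    _ = b * Real.exp (-b) := by rw [h2]; ring

lemma my_log_le_rpow {v δ : ℝ} (hv : 0 < v) (hδ : 0 < δ) : Real.log v ≤ v ^ δ / δ := by
  have h1 : Real.log (v ^ δ) ≤ v ^ δ - 1 :=
    Real.log_le_sub_one_of_pos (Real.rpow_pos_of_pos hv δ)
  rw [Real.log_rpow hv] at h1
  rw [le_div_iff₀ hδ]
  nlinarith

lemma my_exists_dyadic {r : ℝ} (hr : 1 < r) : ∃ k : ℕ, 2^k < r ∧ r ≤ 2^(k+1) := by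
  have H : ∃ n : ℕ, r ≤ 2^n := by
    obtain ⟨n, hn⟩ := pow_unbounded_of_one_lt r (by norm_num : (1:ℝ) < 2)
    exact ⟨n, hn.le⟩
  classical
  set n := Nat.find H with hn
  have hn0 : n ≠ 0 := by
    intro h
    have := Nat.find_spec H
    rw [← hn, h] at this
    simp at this; linarith
  refine ⟨n - 1, ?_, ?_⟩
  · have := Nat.find_min H (m := n - 1) (by omega)
    push_neg at this
    exact this
  · have := Nat.find_spec H
    rw [← hn] at this
    have : n - 1 + 1 = n := by omega
    rw [this]
    exact Nat.find_spec H

noncomputable section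

/-- The tail `F̄(x) = 1 − F(x) + F(−x)` of a law `μ` on `ℝ`. -/
def Fbar (μ : Measure ℝ) (x : ℝ) : ℝ :=
  (μ (Set.Ioi x)).toReal + (μ (Set.Iic (-x))).toReal

set_option maxHeartbeats 1000000 in
/-- Let `X` be a real random variable with law `μ`, `E X² < ∞`, whose tail satisfies
`F̄(x) = x^{−2} e^{−g(x)} (1 + o(1))` as `x → ∞`, where `g` is a positive increasing
differentiable function on `[0,∞)` with `g(x) → ∞`, `x g'(x) → 0` as `x → ∞`, and
`g(x) ≥ β₁ log log x` for all sufficiently large `x`, for some `β₁ > 1`.  Then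
`g(x) · E[X² 1(|X| > x)] → 0` as `x → ∞`, i.e. `E[X² 1(|X| > x)] = o(1/g(x))`. -/
theorem truncated_second_moment_little_o
    (μ : Measure ℝ) [IsProbabilityMeasure μ]
    (hsqint : Integrable (fun y => y ^ 2) μ)
    (g g' : ℝ → ℝ)
    (hgpos : ∀ x ≥ 0, 0 < g x)
    (hgmono : MonotoneOn g (Set.Ici 0))
    (hgderiv : ∀ x ≥ 0, HasDerivAt g (g' x) x)
    (hginf : Tendsto g atTop atTop)
    (hgprime : Tendsto (fun x => x * g' x) atTop (nhds 0))
    (β₁ : ℝ) (hβ₁ : 1 < β₁)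
    (hglower : ∀ᶠ x in atTop, β₁ * Real.log (Real.log x) ≤ g x)
    (htail : Tendsto (fun x => Fbar μ x / (Real.exp (-g x) / x ^ 2)) atTop (nhds 1)) :
    Tendsto (fun x => g x * ∫ y in {y : ℝ | x < |y|}, y ^ 2 ∂μ) atTop (nhds 0) := by
  set δ : ℝ := (β₁ - 1) / 2 with hδdef
  set p : ℝ := β₁ - δ with hpdef
  set q : ℝ := (p + 1) / 2 with hqdef
  have hδ : 0 < δ := by rw [hδdef]; linarith
  have hp1 : 1 < p := by rw [hpdef, hδdef]; linarith
  have hq1 : 1 < q := by rw [hqdef]; linarith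
  have hqp : q < p := by rw [hqdef]; linarith
  -- summability of the majorant series
  have hZsum : Summable (fun k : ℕ => ((k : ℝ) + 1) ^ (-q)) := by
    have h1 : Summable (fun n : ℕ => (n : ℝ) ^ (-q)) :=
      Real.summable_nat_rpow.mpr (by linarith)
    have h2 := h1.comp_injective Nat.succ_injective
    refine h2.congr fun k => ?_
    simp [Function.comp]
  set Z : ℝ := ∑' k : ℕ, ((k : ℝ) + 1) ^ (-q) with hZdef
  set C : ℝ := 8 * (β₁ / δ) * (Real.log 2) ^ (-q) * Z with hCdef
  -- eventual hypotheses
  have hev : ∀ᶠ t in atTop, Fbar μ t ≤ 2 * (Real.exp (-g t) / t ^ 2) ∧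
      β₁ * Real.log (Real.log t) ≤ g t ∧ 1 ≤ β₁ * Real.log (Real.log t) := by
    have e1 : ∀ᶠ t in atTop, Fbar μ t / (Real.exp (-g t) / t ^ 2) < 2 :=
      htail.eventually_lt_const (by norm_num)
    have e3 : Tendsto (fun t => β₁ * Real.log (Real.log t)) atTop atTop := by
      apply Tendsto.const_mul_atTop (by linarith : (0:ℝ) < β₁)
      exact Real.tendsto_log_atTop.comp Real.tendsto_log_atTop
    filter_upwards [e1, hglower, e3.eventually_ge_atTop 1, eventually_ge_atTop (1:ℝ)]
      with t h1 h2 h3 ht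
    refine ⟨?_, h2, h3⟩
    have hd : 0 < Real.exp (-g t) / t ^ 2 := by positivity
    calc Fbar μ t = Fbar μ t / (Real.exp (-g t) / t ^ 2) * (Real.exp (-g t) / t ^ 2) := by
          field_simp
      _ ≤ 2 * (Real.exp (-g t) / t ^ 2) := by
          apply mul_le_mul_of_nonneg_right h1.le hd.le
  obtain ⟨X₀, hX₀⟩ := eventually_atTop.mp hev
  -- the key bound
  have key : ∀ x : ℝ, max X₀ 2 ≤ x →
      g x * ∫ y in {y : ℝ | x < |y|}, y ^ 2 ∂μ ≤ C * (Real.log x) ^ (q - p) := by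
    intro x hx
    have hx2 : (2:ℝ) ≤ x := le_trans (le_max_right _ _) hx
    have hxX : X₀ ≤ x := le_trans (le_max_left _ _) hx
    have hx0 : (0:ℝ) < x := by linarith
    have hlx : 0 < Real.log x := Real.log_pos (by linarith)
    have hl2 : 0 < Real.log 2 := Real.log_pos (by norm_num)
    have hl2x : Real.log 2 ≤ Real.log x := Real.log_le_log (by norm_num) hx2
    set A : ℕ → Set ℝ := fun k => {y : ℝ | 2^k * x < |y| ∧ |y| ≤ 2^(k+1) * x} with hAdef
    have hAm : ∀ k, MeasurableSet (A k) := by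
      intro k
      have : A k = (fun y : ℝ => |y|) ⁻¹' Set.Ioc (2^k * x) (2^(k+1) * x) := rfl
      rw [this]
      exact measurable_abs measurableSet_Ioc
    have hAdisj : Pairwise (Function.onFun Disjoint A) := by
      have key2 : ∀ k l : ℕ, k < l → Disjoint (A k) (A l) := by
        intro k l hkl
        rw [Set.disjoint_left]
        rintro y ⟨h1, h2⟩ ⟨h3, h4⟩
        have hle : (2:ℝ)^(k+1) ≤ 2^l := by
          apply pow_le_pow_right₀ (by norm_num) (by omega)
        have : (2:ℝ)^(k+1) * x ≤ 2^l * x := by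
          apply mul_le_mul_of_nonneg_right hle hx0.le
        linarith
      intro k l hkl
      rcases hkl.lt_or_gt with h | h
      · exact key2 k l h
      · exact (key2 l k h).symm
    have hAunion : (⋃ k, A k) = {y : ℝ | x < |y|} := by
      ext y
      simp only [Set.mem_iUnion, Set.mem_setOf_eq, hAdef]
      constructor
      · rintro ⟨k, h1, h2⟩
        have h2k : (1:ℝ) ≤ 2^k := one_le_pow₀ (by norm_num)
        nlinarith
      · intro hy
        have hr : 1 < |y| / x := (one_lt_div hx0).mpr hy
        obtain ⟨k, hk1, hk2⟩ := my_exists_dyadic hr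
        exact ⟨k, (lt_div_iff₀ hx0).mp hk1, (div_le_iff₀ hx0).mp hk2⟩
    have hIntU : IntegrableOn (fun y : ℝ => y ^ 2) (⋃ k, A k) μ := hsqint.integrableOn
    have hSum : HasSum (fun k => ∫ y in A k, y ^ 2 ∂μ) (∫ y in ⋃ k, A k, y ^ 2 ∂μ) :=
      hasSum_integral_iUnion hAm hAdisj hIntU
    -- per-k bound
    have hgx0 : 0 < g x := hgpos x hx0.le
    have hk : ∀ k : ℕ, g x * ∫ y in A k, y ^ 2 ∂μ ≤
        (8 * (β₁ / δ) * (Real.log x) ^ (q - p) * (Real.log 2) ^ (-q)) * ((k : ℝ) + 1) ^ (-q) := by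
      intro k
      set t : ℝ := 2^k * x with htdef
      have h2k : (1:ℝ) ≤ 2^k := one_le_pow₀ (by norm_num)
      have htx : x ≤ t := by rw [htdef]; nlinarith
      have ht0 : 0 < t := lt_of_lt_of_le hx0 htx
      have ht2 : (2:ℝ) ≤ t := le_trans hx2 htx
      obtain ⟨hF, hgl, hgl1⟩ := hX₀ t (le_trans hxX htx)
      have hlt : 0 < Real.log t := Real.log_pos (by linarith)
      -- integral over A k bounded
      have hstep1 : ∫ y in A k, y ^ 2 ∂μ ≤ (2^(k+1) * x) ^ 2 * (μ (A k)).toReal := by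
        have hmono : ∀ y ∈ A k, y ^ 2 ≤ (2^(k+1) * x) ^ 2 := by
          rintro y ⟨h1, h2⟩
          have := abs_nonneg y
          nlinarith [sq_abs y]
        calc ∫ y in A k, y ^ 2 ∂μ ≤ ∫ _ in A k, (2^(k+1) * x) ^ 2 ∂μ :=
              setIntegral_mono_on hsqint.integrableOn
                ((integrableOn_const_iff).mpr (Or.inr (measure_lt_top μ _))) (hAm k) hmono
          _ = (μ (A k)).toReal * (2^(k+1) * x) ^ 2 := by
              rw [setIntegral_const]; rw [smul_eq_mul]; rfl
          _ = (2^(k+1) * x) ^ 2 * (μ (A k)).toReal := by ring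
      have hstep2 : (μ (A k)).toReal ≤ Fbar μ t := by
        have hsub : A k ⊆ Set.Ioi t ∪ Set.Iic (-t) := by
          rintro y ⟨h1, h2⟩
          rcases le_or_gt 0 y with hy | hy
          · left; rw [Set.mem_Ioi]; rw [abs_of_nonneg hy] at h1; exact h1
          · right; rw [Set.mem_Iic]; rw [abs_of_neg hy] at h1; linarith
        have h1 : μ (A k) ≤ μ (Set.Ioi t) + μ (Set.Iic (-t)) :=
          le_trans (measure_mono hsub) (measure_union_le _ _)
        have h2 : (μ (A k)).toReal ≤ (μ (Set.Ioi t) + μ (Set.Iic (-t))).toReal := by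
          apply ENNReal.toReal_mono _ h1
          exact ENNReal.add_ne_top.mpr ⟨measure_ne_top μ _, measure_ne_top μ _⟩
        rwa [ENNReal.toReal_add (measure_ne_top μ _) (measure_ne_top μ _)] at h2
      have hstep3 : ∫ y in A k, y ^ 2 ∂μ ≤ 8 * Real.exp (-g t) := by
        have h1 : ∫ y in A k, y ^ 2 ∂μ ≤ (2^(k+1) * x) ^ 2 * (2 * (Real.exp (-g t) / t ^ 2)) := by
          calc ∫ y in A k, y ^ 2 ∂μ ≤ (2^(k+1) * x) ^ 2 * (μ (A k)).toReal := hstep1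
            _ ≤ (2^(k+1) * x) ^ 2 * (2 * (Real.exp (-g t) / t ^ 2)) := by
                apply mul_le_mul_of_nonneg_left (le_trans hstep2 hF) (by positivity)
        have hpow : (2^(k+1) * x) ^ 2 = 4 * t ^ 2 := by rw [htdef, pow_succ]; ring
        rw [hpow] at h1
        have : 4 * t ^ 2 * (2 * (Real.exp (-g t) / t ^ 2)) = 8 * Real.exp (-g t) := by
          field_simp; ring
        linarith [h1, this.le, this.ge]
      -- now the g-bound chain
      have hgt0 : 0 < g t := hgpos t ht0.le
      have hgxt : g x ≤ g t := hgmono hx0.le ht0.le htx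
      have hchain : g t * Real.exp (-g t) ≤ (β₁ / δ) * (Real.log t) ^ (-p) := by
        have h1 : g t * Real.exp (-g t) ≤
            (β₁ * Real.log (Real.log t)) * Real.exp (-(β₁ * Real.log (Real.log t))) :=
          my_mul_exp_antitone hgl1 hgl
        have h2 : Real.exp (-(β₁ * Real.log (Real.log t))) = (Real.log t) ^ (-β₁) := by
          rw [Real.rpow_def_of_pos hlt]; ring_nf
        have h3 : β₁ * Real.log (Real.log t) ≤ β₁ * ((Real.log t) ^ δ / δ) := by
          apply mul_le_mul_of_nonneg_left (my_log_le_rpow hlt hδ) (by linarith)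
        have h4 : (Real.log t) ^ δ * (Real.log t) ^ (-β₁) = (Real.log t) ^ (-p) := by
          rw [← Real.rpow_add hlt]
          congr 1
          rw [hpdef]; ring
        calc g t * Real.exp (-g t) ≤
              (β₁ * Real.log (Real.log t)) * Real.exp (-(β₁ * Real.log (Real.log t))) := h1
          _ = (β₁ * Real.log (Real.log t)) * (Real.log t) ^ (-β₁) := by rw [h2]
          _ ≤ (β₁ * ((Real.log t) ^ δ / δ)) * (Real.log t) ^ (-β₁) := by
              apply mul_le_mul_of_nonneg_right h3 (Real.rpow_nonneg hlt.le _)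
          _ = (β₁ / δ) * ((Real.log t) ^ δ * (Real.log t) ^ (-β₁)) := by ring
          _ = (β₁ / δ) * (Real.log t) ^ (-p) := by rw [h4]
      -- split the power of log t
      have hlogt : Real.log t = Real.log x + k * Real.log 2 := by
        rw [htdef, Real.log_mul (by positivity) (by positivity), Real.log_pow]
        push_cast; ring
      have hlxt : Real.log x ≤ Real.log t := by
        rw [hlogt]
        linarith [mul_nonneg (Nat.cast_nonneg k : (0:ℝ) ≤ k) hl2.le]
      have hkl2 : ((k : ℝ) + 1) * Real.log 2 ≤ Real.log t := by
        rw [hlogt]; have : ((k:ℝ)+1) * Real.log 2 = (k:ℝ) * Real.log 2 + Real.log 2 := by ring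
        linarith
      have hkl2pos : 0 < ((k : ℝ) + 1) * Real.log 2 := by positivity
      have hsplit : (Real.log t) ^ (-p) ≤
          (Real.log x) ^ (q - p) * (((k : ℝ) + 1) ^ (-q) * (Real.log 2) ^ (-q)) := by
        have e1 : (Real.log t) ^ (-p) = (Real.log t) ^ (q - p) * (Real.log t) ^ (-q) := by
          rw [← Real.rpow_add hlt]; congr 1; ring
        have e2 : (Real.log t) ^ (q - p) ≤ (Real.log x) ^ (q - p) :=
          Real.rpow_le_rpow_of_nonpos hlx hlxt (by linarith)
        have e3 : (Real.log t) ^ (-q) ≤ (((k : ℝ) + 1) * Real.log 2) ^ (-q) :=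
          Real.rpow_le_rpow_of_nonpos hkl2pos hkl2 (by linarith)
        have e4 : (((k : ℝ) + 1) * Real.log 2) ^ (-q) =
            ((k : ℝ) + 1) ^ (-q) * (Real.log 2) ^ (-q) :=
          Real.mul_rpow (by positivity) hl2.le
        rw [e1]
        calc (Real.log t) ^ (q - p) * (Real.log t) ^ (-q)
            ≤ (Real.log x) ^ (q - p) * (((k : ℝ) + 1) * Real.log 2) ^ (-q) := by
              apply mul_le_mul e2 e3 (Real.rpow_nonneg hlt.le _) (Real.rpow_nonneg hlx.le _)
          _ = (Real.log x) ^ (q - p) * (((k : ℝ) + 1) ^ (-q) * (Real.log 2) ^ (-q)) := by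
              rw [e4]
      -- assemble
      have hInonneg : 0 ≤ ∫ y in A k, y ^ 2 ∂μ :=
        setIntegral_nonneg (hAm k) (fun y _ => sq_nonneg y)
      calc g x * ∫ y in A k, y ^ 2 ∂μ
          ≤ g x * (8 * Real.exp (-g t)) := by
            apply mul_le_mul_of_nonneg_left hstep3 hgx0.le
        _ = 8 * (g x * Real.exp (-g t)) := by ring
        _ ≤ 8 * (g t * Real.exp (-g t)) := by
            have := mul_le_mul_of_nonneg_right hgxt (Real.exp_pos (-g t)).le
            linarith
        _ ≤ 8 * ((β₁ / δ) * (Real.log t) ^ (-p)) := by linarith [hchain]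
        _ ≤ 8 * ((β₁ / δ) * ((Real.log x) ^ (q - p) *
              (((k : ℝ) + 1) ^ (-q) * (Real.log 2) ^ (-q)))) := by
            have hbd : 0 < β₁ / δ := by positivity
            nlinarith [hsplit, hbd]
        _ = (8 * (β₁ / δ) * (Real.log x) ^ (q - p) * (Real.log 2) ^ (-q)) *
              ((k : ℝ) + 1) ^ (-q) := by ring
    -- sum up over k
    have hLHSsum : Summable (fun k => g x * ∫ y in A k, y ^ 2 ∂μ) :=
      (hSum.summable).mul_left (g x)
    have hRHSsum : Summable (fun k : ℕ =>
        (8 * (β₁ / δ) * (Real.log x) ^ (q - p) * (Real.log 2) ^ (-q)) * ((k : ℝ) + 1) ^ (-q)) :=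
      hZsum.mul_left _
    have htot : g x * ∫ y in {y : ℝ | x < |y|}, y ^ 2 ∂μ ≤
        (8 * (β₁ / δ) * (Real.log x) ^ (q - p) * (Real.log 2) ^ (-q)) * Z := by
      have e1 : g x * ∫ y in {y : ℝ | x < |y|}, y ^ 2 ∂μ =
          ∑' k, g x * ∫ y in A k, y ^ 2 ∂μ := by
        rw [← hAunion, ← hSum.tsum_eq, tsum_mul_left]
      rw [e1, hZdef, ← tsum_mul_left]
      exact Summable.tsum_le_tsum hk hLHSsum hRHSsum
    calc g x * ∫ y in {y : ℝ | x < |y|}, y ^ 2 ∂μ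
        ≤ (8 * (β₁ / δ) * (Real.log x) ^ (q - p) * (Real.log 2) ^ (-q)) * Z := htot
      _ = C * (Real.log x) ^ (q - p) := by rw [hCdef]; ring
  -- final squeeze
  have hupper : Tendsto (fun x => C * (Real.log x) ^ (q - p)) atTop (nhds 0) := by
    have h1 : Tendsto (fun u : ℝ => u ^ (-(p - q))) atTop (nhds 0) :=
      tendsto_rpow_neg_atTop (by linarith)
    have h2 := (h1.comp Real.tendsto_log_atTop).const_mul C
    simp only [mul_zero] at h2
    refine h2.congr fun x => ?_
    simp only [Function.comp]
    congr 2
    ring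
  apply squeeze_zero' _ _ hupper
  · filter_upwards [eventually_ge_atTop (0:ℝ)] with x hx
    have h1 : 0 < g x := hgpos x hx
    have h2 : 0 ≤ ∫ y in {y : ℝ | x < |y|}, y ^ 2 ∂μ := by
      apply setIntegral_nonneg _ (fun y _ => sq_nonneg y)
      have : {y : ℝ | x < |y|} = (fun y : ℝ => |y|) ⁻¹' Set.Ioi x := rfl
      rw [this]; exact measurable_abs measurableSet_Ioi
    positivity
  · filter_upwards [eventually_ge_atTop (max X₀ 2)] with x hx
    exact key x hx


end
end

section
/- Let X be a real random variable with distribution function F whose tail satisfies F̄(x) = D(x) x^{−2} e^{−v(x)} (1 + o(1)) as x → ∞, where v is a positive increasing differentiable function on [0,∞) with v(x) → ∞ as x → ∞ and v′(x) ≤ (x log x)^{−1} for all sufficiently large x. Then v(x) · D(x)^{−1} · ∫_{x/√(v(x))}^{x} y (1 − F(y) + F(−y)) dy → 0 as x → ∞. -/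
open MeasureTheory ProbabilityTheory Filter

noncomputable section

/-- The truncated second moment `D(x) = ∫_{|y|<x} y² dF(y)`. -/
def truncVar (μ : Measure ℝ) (x : ℝ) : ℝ :=
  ∫ y in Set.Ioo (-x) x, y ^ 2 ∂μ

lemma Fbar_nonneg (μ : Measure ℝ) (x : ℝ) : 0 ≤ Fbar μ x := by
  unfold Fbar; positivity

lemma Fbar_le_two (μ : Measure ℝ) [IsProbabilityMeasure μ] (x : ℝ) : Fbar μ x ≤ 2 := by
  unfold Fbar
  have h1 : (μ (Set.Ioi x)).toReal ≤ 1 := by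
    rw [← ENNReal.toReal_one]
    exact ENNReal.toReal_mono ENNReal.one_ne_top prob_le_one
  have h2 : (μ (Set.Iic (-x))).toReal ≤ 1 := by
    rw [← ENNReal.toReal_one]
    exact ENNReal.toReal_mono ENNReal.one_ne_top prob_le_one
  linarith

lemma Fbar_antitone (μ : Measure ℝ) [IsProbabilityMeasure μ] : Antitone (Fbar μ) := by
  intro a b hab
  unfold Fbar
  have h1 : (μ (Set.Ioi b)).toReal ≤ (μ (Set.Ioi a)).toReal :=
    ENNReal.toReal_mono (measure_ne_top μ _) (measure_mono (Set.Ioi_subset_Ioi hab))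
  have h2 : (μ (Set.Iic (-b))).toReal ≤ (μ (Set.Iic (-a))).toReal :=
    ENNReal.toReal_mono (measure_ne_top μ _) (measure_mono (Set.Iic_subset_Iic.2 (neg_le_neg hab)))
  linarith

lemma Fbar_measurable (μ : Measure ℝ) [IsProbabilityMeasure μ] : Measurable (Fbar μ) :=
  (Fbar_antitone μ).measurable

lemma truncVar_integrableOn (μ : Measure ℝ) [IsProbabilityMeasure μ] (q : ℝ) :
    IntegrableOn (fun y : ℝ => y ^ 2) (Set.Ioo (-q) q) μ := by
  refine (integrable_const (q ^ 2)).mono' (by fun_prop) ?_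
  filter_upwards [ae_restrict_mem measurableSet_Ioo] with y hy
  have h1 : |y| ≤ q := by
    rw [abs_le]; exact ⟨hy.1.le, hy.2.le⟩
  calc ‖y ^ 2‖ = |y| ^ 2 := by rw [Real.norm_eq_abs, abs_pow, sq_abs, ← sq_abs]
  _ ≤ q ^ 2 := by
      have : (0:ℝ) ≤ |y| := abs_nonneg y
      nlinarith

lemma truncVar_mono (μ : Measure ℝ) [IsProbabilityMeasure μ] {p q : ℝ} (hpq : p ≤ q) :
    truncVar μ p ≤ truncVar μ q := by
  unfold truncVar
  apply setIntegral_mono_set (truncVar_integrableOn μ q)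
  · filter_upwards with y using sq_nonneg y
  · filter_upwards with y hy using ⟨by linarith [hy.1], by linarith [hy.2]⟩

lemma log_fact {x : ℝ} (hx : 3 ≤ x) : 1 < Real.log x := by
  rw [Real.lt_log_iff_exp_lt (by linarith)]
  calc Real.exp 1 < 2.7182818286 := Real.exp_one_lt_d9
  _ ≤ x := by linarith

/-- Let `X` be a real random variable with law `μ` whose tail satisfies
`F̄(x) = D(x) x^{−2} e^{−v(x)} (1 + o(1))` as `x → ∞`, where `v` is a positive increasing
differentiable function on `[0,∞)` with `v(x) → ∞` as `x → ∞` and `v'(x) ≤ (x log x)^{−1}`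
for all sufficiently large `x`, and suppose `D(x) > 0` for all large `x`.  Then
`v(x) · D(x)^{−1} · ∫_{x/√(v(x))}^{x} y (1 − F(y) + F(−y)) dy → 0` as `x → ∞`. -/
theorem rozovskii_condition
    (μ : Measure ℝ) [IsProbabilityMeasure μ]
    (v v' : ℝ → ℝ)
    (hvpos : ∀ x ≥ 0, 0 < v x)
    (hvmono : MonotoneOn v (Set.Ici 0))
    (hvderiv : ∀ x ≥ 0, HasDerivAt v (v' x) x)
    (hvinf : Tendsto v atTop atTop)
    (hvprime : ∃ M : ℝ, ∀ x ≥ M, v' x ≤ (x * Real.log x)⁻¹)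
    (hDpos : ∀ᶠ x in atTop, 0 < truncVar μ x)
    (htail : Tendsto
      (fun x => Fbar μ x / (truncVar μ x * Real.exp (-v x) / x ^ 2)) atTop (nhds 1)) :
    Tendsto (fun x => v x / truncVar μ x *
        ∫ y in Set.Icc (x / Real.sqrt (v x)) x, y * Fbar μ y) atTop (nhds 0) := by
  obtain ⟨M, hM⟩ := hvprime
  set a : ℝ := max M 3 with ha
  have ha3 : (3:ℝ) ≤ a := le_max_right M 3
  -- the antitone comparison function
  have hanti : AntitoneOn (fun t => v t - Real.log (Real.log t)) (Set.Ici a) := by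
    have hg : ∀ x : ℝ, a ≤ x →
        HasDerivAt (fun t => v t - Real.log (Real.log t)) (v' x - (x * Real.log x)⁻¹) x := by
      intro x hx
      have hx3 : (3:ℝ) ≤ x := le_trans ha3 hx
      have hx0 : x ≠ 0 := by linarith
      have hlog := log_fact hx3
      have h2 : HasDerivAt (fun t => Real.log (Real.log t)) ((Real.log x)⁻¹ * x⁻¹) x :=
        (Real.hasDerivAt_log (by linarith)).comp x (Real.hasDerivAt_log hx0)
      have h2' : HasDerivAt (fun t => Real.log (Real.log t)) ((x * Real.log x)⁻¹) x := by
        rw [mul_inv, mul_comm]; exact h2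
      exact (hvderiv x (by linarith)).sub h2'
    apply antitoneOn_of_deriv_nonpos (convex_Ici a)
    · intro x hx
      exact (hg x hx).continuousAt.continuousWithinAt
    · intro x hx
      rw [interior_Ici] at hx
      exact (hg x hx.le).differentiableAt.differentiableWithinAt
    · intro x hx
      rw [interior_Ici] at hx
      rw [(hg x hx.le).deriv]
      have := hM x (le_of_lt (lt_of_le_of_lt (le_max_left M 3) hx))
      linarith
  have hincr : ∀ p q : ℝ, a ≤ p → p ≤ q →
      v q - v p ≤ Real.log (Real.log q) - Real.log (Real.log p) := by
    intro p q hp hpq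
    have := hanti hp (le_trans hp hpq) hpq
    simp only at this
    linarith
  -- growth bound : eventually v x ≤ √x
  set K : ℝ := v a - Real.log (Real.log a) with hK
  have hvsq : ∀ᶠ x in atTop, v x ≤ Real.sqrt x := by
    have hlo : Real.log =o[atTop] fun x : ℝ => x ^ ((1:ℝ)/2) :=
      isLittleO_log_rpow_atTop (by norm_num)
    have hb := hlo.bound (by norm_num : (0:ℝ) < 1/2)
    filter_upwards [hb, eventually_ge_atTop a, eventually_ge_atTop ((2*|K|)^2),
      eventually_ge_atTop (0:ℝ)] with x hbx hxa hxK hx0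
    have hx3 : (3:ℝ) ≤ x := le_trans ha3 hxa
    -- v x ≤ K + log log x
    have h1 : v x ≤ K + Real.log (Real.log x) := by
      have := hincr a x le_rfl hxa
      rw [hK]; linarith
    -- log log x ≤ log x
    have hlogx := log_fact hx3
    have h2 : Real.log (Real.log x) ≤ Real.log x :=
      Real.log_le_self (by linarith)
    -- log x ≤ √x / 2
    have h3 : Real.log x ≤ Real.sqrt x / 2 := by
      have h := hbx
      rw [Real.norm_eq_abs, Real.norm_eq_abs,
        show x ^ ((1:ℝ)/2) = Real.sqrt x from (Real.sqrt_eq_rpow x).symm,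
        abs_of_nonneg (Real.sqrt_nonneg x)] at h
      have := le_trans (le_abs_self _) h
      linarith
    -- 2|K| ≤ √x
    have h5 : 2 * |K| ≤ Real.sqrt x := by
      have : Real.sqrt ((2*|K|)^2) ≤ Real.sqrt x := Real.sqrt_le_sqrt hxK
      rwa [Real.sqrt_sq (by positivity)] at this
    have h6 : K ≤ |K| := le_abs_self K
    linarith
  -- z x ≥ √x eventually
  set z : ℝ → ℝ := fun x => x / Real.sqrt (v x) with hz
  have hzsq : ∀ᶠ x in atTop, Real.sqrt x ≤ z x := by
    filter_upwards [hvsq, eventually_ge_atTop (1:ℝ)] with x hvx hx1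
    have hx0 : (0:ℝ) ≤ x := by linarith
    have hvpos' : 0 < v x := hvpos x hx0
    have hsq : 0 < Real.sqrt (v x) := Real.sqrt_pos.2 hvpos'
    rw [hz]
    rw [le_div_iff₀ hsq]
    have hxx : Real.sqrt x ≤ x := (Real.sqrt_le_left hx0).2 (by nlinarith)
    calc Real.sqrt x * Real.sqrt (v x) = Real.sqrt (x * v x) := (Real.sqrt_mul hx0 _).symm
    _ ≤ Real.sqrt (x * x) := Real.sqrt_le_sqrt (by nlinarith [le_trans hvx hxx])
    _ = x := Real.sqrt_mul_self hx0
  have hsqrt_top : Tendsto Real.sqrt atTop atTop := by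
    have : Real.sqrt = fun x : ℝ => x ^ ((1:ℝ)/2) := funext fun x => Real.sqrt_eq_rpow x
    rw [this]
    exact tendsto_rpow_atTop (by norm_num)
  have hztop : Tendsto z atTop atTop :=
    tendsto_atTop_mono' atTop hzsq hsqrt_top
  -- the tail bound, eventually
  have hP : ∀ᶠ y in atTop, a ≤ y ∧ 1 ≤ y ∧ 0 < truncVar μ y ∧
      Fbar μ y ≤ 2 * (truncVar μ y * Real.exp (-v y) / y ^ 2) := by
    filter_upwards [eventually_ge_atTop a, eventually_ge_atTop (1:ℝ), hDpos,
      htail.eventually_lt_const (show (1:ℝ) < 2 by norm_num)] with y h1 h2 h3 h4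
    refine ⟨h1, h2, h3, ?_⟩
    have hQ : 0 < truncVar μ y * Real.exp (-v y) / y ^ 2 := by positivity
    rw [div_lt_iff₀ hQ] at h4
    linarith
  have hPz := hztop.eventually hP
  -- squeeze
  have hg0 : Tendsto (fun x => 4 * (v x) ^ 2 * Real.exp (-v x)) atTop (nhds 0) := by
    have h := (Real.tendsto_pow_mul_exp_neg_atTop_nhds_zero 2).comp hvinf
    have h4 := h.const_mul (4:ℝ)
    rw [mul_zero] at h4
    simp only [Function.comp] at h4
    convert h4 using 2 with x
    · ring
  refine squeeze_zero' ?_ ?_ hg0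
  · -- nonnegativity
    filter_upwards [hDpos, eventually_ge_atTop (0:ℝ), hPz] with x hD hx0 hpz
    obtain ⟨hza, hz1, hDz, htz⟩ := hpz
    have hvpos' : 0 < v x := hvpos x hx0
    apply mul_nonneg (by positivity)
    apply setIntegral_nonneg measurableSet_Icc
    intro y hy
    have : (0:ℝ) ≤ y := le_trans (by linarith) hy.1
    exact mul_nonneg this (Fbar_nonneg μ y)
  · -- upper bound
    filter_upwards [hDpos, eventually_ge_atTop a, hPz, hvsq,
      hvinf.eventually_ge_atTop 1] with x hD hxa hpz hvsqx hv1
    obtain ⟨hza, hz1, hDz, htz⟩ := hpz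
    have hx3 : (3:ℝ) ≤ x := le_trans ha3 hxa
    have hx0 : (0:ℝ) < x := by linarith
    have hvx : (0:ℝ) < v x := hvpos x hx0.le
    have hsv1 : (1:ℝ) ≤ Real.sqrt (v x) := by
      rw [show (1:ℝ) = Real.sqrt 1 from Real.sqrt_one.symm]
      exact Real.sqrt_le_sqrt hv1
    have hsvpos : 0 < Real.sqrt (v x) := by linarith
    have hzle : z x ≤ x := by
      rw [hz]; exact div_le_self hx0.le hsv1
    have hzpos : 0 < z x := by linarith
    have hz2 : (z x) ^ 2 = x ^ 2 / v x := by
      rw [hz]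
      simp only
      rw [div_pow, Real.sq_sqrt hvx.le]
    -- increment bound : v x - v (z x) ≤ log 2
    have hlogx := log_fact hx3
    have hvlex : v x ≤ x := le_trans hvsqx ((Real.sqrt_le_left hx0.le).2 (by nlinarith))
    have hlogz : Real.log (z x) = Real.log x - Real.log (v x) / 2 := by
      rw [hz]
      simp only
      rw [Real.log_div hx0.ne' hsvpos.ne', Real.log_sqrt hvx.le]
    have hlogvx : Real.log (v x) ≤ Real.log x := by
      rw [Real.log_le_log_iff hvx hx0]; exact hvlex
    have hlogz_ge : Real.log x / 2 ≤ Real.log (z x) := by rw [hlogz]; linarith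
    have hloglogz : Real.log (Real.log x / 2) ≤ Real.log (Real.log (z x)) := by
      rw [Real.log_le_log_iff (by linarith) (by linarith)]
      exact hlogz_ge
    have hlog2 : Real.log (Real.log x / 2) = Real.log (Real.log x) - Real.log 2 := by
      rw [Real.log_div (by linarith) (by norm_num)]
    have hvincr : v x - v (z x) ≤ Real.log 2 := by
      have := hincr (z x) x hza hzle
      linarith
    have hexp : Real.exp (-v (z x)) ≤ 2 * Real.exp (-v x) := by
      calc Real.exp (-v (z x)) ≤ Real.exp (Real.log 2 + -v x) :=
        Real.exp_le_exp.2 (by linarith)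
      _ = 2 * Real.exp (-v x) := by rw [Real.exp_add, Real.exp_log (by norm_num)]
    have hDzx : truncVar μ (z x) ≤ truncVar μ x := truncVar_mono μ hzle
    -- Fbar bound at z x
    have hFz : Fbar μ (z x) ≤ 4 * truncVar μ x * Real.exp (-v x) * v x / x ^ 2 := by
      have hz2pos : (0:ℝ) < (z x) ^ 2 := by positivity
      have hnum : truncVar μ (z x) * Real.exp (-v (z x)) ≤
          truncVar μ x * (2 * Real.exp (-v x)) :=
        mul_le_mul hDzx hexp (Real.exp_nonneg _) (le_of_lt (lt_of_lt_of_le hDz hDzx))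
      have step1 : Fbar μ (z x) ≤ 2 * (truncVar μ x * (2 * Real.exp (-v x)) / (z x) ^ 2) := by
        refine le_trans htz ?_
        have : truncVar μ (z x) * Real.exp (-v (z x)) / (z x) ^ 2 ≤
            truncVar μ x * (2 * Real.exp (-v x)) / (z x) ^ 2 := by gcongr
        linarith
      have step2 : 2 * (truncVar μ x * (2 * Real.exp (-v x)) / (z x) ^ 2) =
          4 * truncVar μ x * Real.exp (-v x) * v x / x ^ 2 := by
        rw [hz2]
        field_simp
        ring
      linarith
    -- integral bound
    have hIntf : IntegrableOn (fun y => y * Fbar μ y) (Set.Icc (z x) x) volume := by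
      refine Integrable.mono' (g := fun _ : ℝ => 2 * x)
        (integrableOn_const measure_Icc_lt_top.ne)
        ((measurable_id.mul (Fbar_measurable μ)).aestronglyMeasurable) ?_
      filter_upwards [ae_restrict_mem measurableSet_Icc] with y hy
      have hy0 : (0:ℝ) ≤ y := le_trans hzpos.le hy.1
      have hF2 := Fbar_le_two μ y
      have hF0 := Fbar_nonneg μ y
      rw [Real.norm_eq_abs, abs_of_nonneg (mul_nonneg hy0 hF0)]
      calc y * Fbar μ y ≤ x * 2 := mul_le_mul hy.2 hF2 hF0 hx0.le
      _ = 2 * x := by ring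
    have hIconst : IntegrableOn (fun _ : ℝ => x * Fbar μ (z x)) (Set.Icc (z x) x) volume :=
      integrableOn_const measure_Icc_lt_top.ne
    have hI1 : (∫ y in Set.Icc (z x) x, y * Fbar μ y) ≤
        (x - z x) * (x * Fbar μ (z x)) := by
      calc (∫ y in Set.Icc (z x) x, y * Fbar μ y) ≤
          ∫ _ in Set.Icc (z x) x, x * Fbar μ (z x) := by
            apply setIntegral_mono_on hIntf hIconst measurableSet_Icc
            intro y hy
            exact mul_le_mul hy.2 (Fbar_antitone μ hy.1) (Fbar_nonneg μ y) hx0.le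
      _ = (volume (Set.Icc (z x) x)).toReal * (x * Fbar μ (z x)) := setIntegral_const _
      _ = (x - z x) * (x * Fbar μ (z x)) := by
            rw [Real.volume_Icc, ENNReal.toReal_ofReal (by linarith)]
    have hI : (∫ y in Set.Icc (z x) x, y * Fbar μ y) ≤ x ^ 2 * Fbar μ (z x) := by
      have h0 : 0 ≤ x * Fbar μ (z x) := mul_nonneg hx0.le (Fbar_nonneg μ (z x))
      nlinarith [mul_nonneg hzpos.le h0]
    -- final chain
    have hvD : 0 ≤ v x / truncVar μ x := by positivity
    calc v x / truncVar μ x * ∫ y in Set.Icc (x / Real.sqrt (v x)) x, y * Fbar μ y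
        = v x / truncVar μ x * ∫ y in Set.Icc (z x) x, y * Fbar μ y := by rw [hz]
    _ ≤ v x / truncVar μ x * (x ^ 2 * Fbar μ (z x)) := mul_le_mul_of_nonneg_left hI hvD
    _ ≤ v x / truncVar μ x *
          (x ^ 2 * (4 * truncVar μ x * Real.exp (-v x) * v x / x ^ 2)) := by
        exact mul_le_mul_of_nonneg_left (mul_le_mul_of_nonneg_left hFz (sq_nonneg x)) hvD
    _ = 4 * (v x) ^ 2 * Real.exp (-v x) := by
        field_simp

end
end

section
/- Let (p_n) be a sequence of integers with p_n → ∞, and for each n let x_n be the real number determined by Φ(x_n)^{p_n} = e^{−1}. Then x_n / √(2 log p_n) → 1 as n → ∞. -/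
open MeasureTheory ProbabilityTheory Filter

noncomputable section

namespace StdNormalAux

open Real Set

lemma pdf_eq (u : ℝ) :
    gaussianPDFReal 0 1 u = (Real.sqrt (2 * π))⁻¹ * rexp (-(u ^ 2 / 2)) := by
  simp [gaussianPDFReal, neg_div]

lemma meas_toReal (s : Set ℝ) :
    (gaussianReal 0 1 s).toReal = ∫ u in s, gaussianPDFReal 0 1 u := by
  rw [gaussianReal_apply_eq_integral 0 one_ne_zero s, ENNReal.toReal_ofReal]
  exact integral_nonneg fun u => gaussianPDFReal_nonneg 0 1 u

lemma one_sub_cdf (t : ℝ) :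
    1 - stdNormalCDF t = (gaussianReal 0 1 (Set.Ioi t)).toReal := by
  have h := measure_add_measure_compl (μ := gaussianReal 0 1) (measurableSet_Iic (a := t))
  rw [Set.compl_Iic, measure_univ] at h
  have h2 : (gaussianReal 0 1 (Set.Iic t)).toReal + (gaussianReal 0 1 (Set.Ioi t)).toReal = 1 := by
    rw [← ENNReal.toReal_add (measure_ne_top _ _) (measure_ne_top _ _), h, ENNReal.toReal_one]
  simp only [stdNormalCDF]
  linarith

lemma cdf_strictMono : StrictMono stdNormalCDF := by
  intro a b hab
  have hsplit : Set.Iic a ∪ Set.Ioc a b = Set.Iic b := Set.Iic_union_Ioc_eq_Iic hab.le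
  have hdisj : Disjoint (Set.Iic a) (Set.Ioc a b) := by
    apply Set.disjoint_left.2
    rintro u hu ⟨h1, _⟩
    exact absurd hu (not_le.2 h1)
  have hmeas : gaussianReal 0 1 (Set.Iic b)
      = gaussianReal 0 1 (Set.Iic a) + gaussianReal 0 1 (Set.Ioc a b) := by
    rw [← hsplit, measure_union hdisj measurableSet_Ioc]
  have hpos : gaussianReal 0 1 (Set.Ioc a b) ≠ 0 := by
    intro h
    have h2 := (gaussianReal_absolutelyContinuous' 0 one_ne_zero) h
    rw [Real.volume_Ioc] at h2
    rw [ENNReal.ofReal_eq_zero] at h2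
    linarith
  have htr : (gaussianReal 0 1 (Set.Iic b)).toReal
      = (gaussianReal 0 1 (Set.Iic a)).toReal + (gaussianReal 0 1 (Set.Ioc a b)).toReal := by
    rw [hmeas, ENNReal.toReal_add (measure_ne_top _ _) (measure_ne_top _ _)]
  have hposR : 0 < (gaussianReal 0 1 (Set.Ioc a b)).toReal :=
    ENNReal.toReal_pos hpos (measure_ne_top _ _)
  simp only [stdNormalCDF]
  rw [htr]
  linarith

lemma integral_exp_neg_mul_Ioi {b : ℝ} (hb : 0 < b) (a : ℝ) :
    ∫ u in Set.Ioi a, rexp (-b * u) = rexp (-b * a) / b := by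
  have hderiv : ∀ u ∈ Set.Ici a,
      HasDerivAt (fun v => -b⁻¹ * rexp (-b * v)) (rexp (-b * u)) u := by
    intro u _
    have h1 : HasDerivAt (fun v : ℝ => -b * v) (-b) u := by
      simpa using (hasDerivAt_id u).const_mul (-b)
    have h2 := (h1.exp).const_mul (-b⁻¹)
    exact h2.congr_deriv (by field_simp)
  have htop : Tendsto (fun v => -b⁻¹ * rexp (-b * v)) atTop (nhds 0) := by
    rw [show (0 : ℝ) = -b⁻¹ * 0 by ring]
    apply Tendsto.const_mul
    apply Real.tendsto_exp_atBot.comp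
    have hmono : Tendsto (fun v : ℝ => -b * v) atTop atBot := by
      simpa [Function.comp_def, neg_mul] using
        tendsto_neg_atTop_atBot.comp (Tendsto.const_mul_atTop hb tendsto_id)
    exact hmono
  rw [integral_Ioi_of_hasDerivAt_of_tendsto' hderiv (exp_neg_integrableOn_Ioi a hb) htop]
  field_simp
  ring

lemma sqrt_two_pi_ge : (2 : ℝ) ≤ Real.sqrt (2 * π) := by
  rw [Real.le_sqrt' (by norm_num)]
  nlinarith [Real.pi_gt_three]

lemma sqrt_two_pi_le : Real.sqrt (2 * π) ≤ 3 := by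
  rw [show (3 : ℝ) = Real.sqrt (3 ^ 2) from (Real.sqrt_sq (by norm_num)).symm]
  exact Real.sqrt_le_sqrt (by nlinarith [Real.pi_lt_d2])

lemma tail_le {T : ℝ} (hT : 2 ≤ T) : 1 - stdNormalCDF T ≤ rexp (-(T ^ 2 / 2)) := by
  have hT0 : 0 < T := by linarith
  have hb : 0 < T / 2 := by linarith
  rw [one_sub_cdf, meas_toReal]
  have hbound : ∫ u in Set.Ioi T, gaussianPDFReal 0 1 u
      ≤ ∫ u in Set.Ioi T, (Real.sqrt (2 * π))⁻¹ * rexp (-(T / 2) * u) := by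
    apply setIntegral_mono_on
    · exact (integrable_gaussianPDFReal 0 1).integrableOn
    · exact (exp_neg_integrableOn_Ioi T hb).const_mul _
    · exact measurableSet_Ioi
    · intro u hu
      rw [pdf_eq]
      have hu' : T < u := hu
      apply mul_le_mul_of_nonneg_left _ (by positivity)
      apply Real.exp_le_exp.2
      nlinarith
  have hint : ∫ u in Set.Ioi T, (Real.sqrt (2 * π))⁻¹ * rexp (-(T / 2) * u)
      = (Real.sqrt (2 * π))⁻¹ * (rexp (-(T / 2) * T) / (T / 2)) := by
    rw [integral_const_mul, integral_exp_neg_mul_Ioi hb]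
  have hexp : -(T / 2) * T = -(T ^ 2 / 2) := by ring
  have hsq := sqrt_two_pi_ge
  have hsq0 : (0 : ℝ) < Real.sqrt (2 * π) := by linarith
  have hE : 0 < rexp (-(T ^ 2 / 2)) := Real.exp_pos _
  calc ∫ u in Set.Ioi T, gaussianPDFReal 0 1 u
      ≤ (Real.sqrt (2 * π))⁻¹ * (rexp (-(T ^ 2 / 2)) / (T / 2)) := by
        rw [← hexp]; exact hbound.trans hint.le
    _ ≤ rexp (-(T ^ 2 / 2)) := by
        rw [inv_mul_le_iff₀ hsq0, div_le_iff₀ hb]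
        nlinarith [mul_nonneg (sub_nonneg.2 hsq) (mul_nonneg hE.le hb.le),
          mul_nonneg hE.le (by linarith : (0 : ℝ) ≤ T - 1)]

lemma tail_ge {t : ℝ} (ht : 0 ≤ t) :
    (Real.sqrt (2 * π))⁻¹ * rexp (-((t + 1) ^ 2 / 2)) ≤ 1 - stdNormalCDF t := by
  rw [one_sub_cdf, meas_toReal]
  have h1 : ∫ u in Set.Ioc t (t + 1), gaussianPDFReal 0 1 u
      ≤ ∫ u in Set.Ioi t, gaussianPDFReal 0 1 u :=
    setIntegral_mono_set (integrable_gaussianPDFReal 0 1).integrableOn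
      (ae_of_all _ fun u => gaussianPDFReal_nonneg 0 1 u)
      (HasSubset.Subset.eventuallyLE Set.Ioc_subset_Ioi_self)
  refine le_trans ?_ h1
  have h2 : ∫ _u in Set.Ioc t (t + 1), gaussianPDFReal 0 1 (t + 1)
      ≤ ∫ u in Set.Ioc t (t + 1), gaussianPDFReal 0 1 u := by
    apply setIntegral_mono_on
    · exact integrableOn_const measure_Ioc_lt_top.ne
    · exact (integrable_gaussianPDFReal 0 1).integrableOn
    · exact measurableSet_Ioc
    · intro u hu
      rw [pdf_eq, pdf_eq]
      apply mul_le_mul_of_nonneg_left _ (by positivity)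
      apply Real.exp_le_exp.2
      have h3 := hu.1
      have h4 := hu.2
      nlinarith
  refine le_trans ?_ h2
  rw [setIntegral_const, measureReal_def, Real.volume_Ioc, show t + 1 - t = 1 by ring, ENNReal.ofReal_one,
    ENNReal.toReal_one, one_smul, pdf_eq]

end StdNormalAux

open StdNormalAux Real

set_option maxHeartbeats 1000000 in
/-- Let `p_n → ∞` be a sequence of integers and let `x_n` be determined by
`Φ(x_n)^{p_n} = e^{−1}`.  Then `x_n / √(2 log p_n) → 1` as `n → ∞`. -/
theorem xn_over_sqrt_two_log_pn_tendsto_one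
    (p : ℕ → ℕ) (hp : Tendsto p atTop atTop)
    (x : ℕ → ℝ) (hx : ∀ n, stdNormalCDF (x n) ^ p n = Real.exp (-1)) :
    Tendsto (fun n => x n / Real.sqrt (2 * Real.log (p n))) atTop (nhds 1) := by
  have hp1 : ∀ n, 1 ≤ p n := by
    intro n
    rcases Nat.eq_zero_or_pos (p n) with h | h
    · exfalso
      have h1 := hx n
      rw [h, pow_zero] at h1
      have h2 : rexp (-1) < 1 := Real.exp_lt_one_iff.2 (by norm_num)
      rw [← h1] at h2
      exact absurd h2 (lt_irrefl _)
    · exact h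
  have hp0 : ∀ n, (0 : ℝ) < (p n : ℝ) := by
    intro n; exact_mod_cast hp1 n
  have hΦ : ∀ n, stdNormalCDF (x n) = rexp (-(1 / (p n : ℝ))) := by
    intro n
    have hpn : p n ≠ 0 := by have := hp1 n; omega
    have h1 : rexp (-(1 / (p n : ℝ))) ^ p n = rexp (-1) := by
      rw [← Real.exp_nat_mul]
      congr 1
      field_simp
    have h2 : stdNormalCDF (x n) ^ p n = rexp (-(1 / (p n : ℝ))) ^ p n := by
      rw [hx n, h1]
    exact pow_left_strictMonoOn₀ hpn |>.injOn
      (by exact ENNReal.toReal_nonneg) (by exact (Real.exp_pos _).le) h2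
  have hpc : Tendsto (fun n => (p n : ℝ)) atTop atTop :=
    tendsto_natCast_atTop_atTop.comp hp
  have hL : Tendsto (fun n => Real.log (p n)) atTop atTop :=
    Real.tendsto_log_atTop.comp hpc
  have hpexp : ∀ n, rexp (-(Real.log (p n))) = 1 / (p n : ℝ) := by
    intro n
    rw [Real.exp_neg, Real.exp_log (hp0 n), one_div]
  -- upper bound
  have upper : ∀ ε : ℝ, 0 < ε →
      ∀ᶠ n in atTop, x n ≤ (1 + ε) * Real.sqrt (2 * Real.log (p n)) := by
    intro ε hε
    filter_upwards [hL.eventually_ge_atTop (max 2 (1 / (2 * ε)))] with n hn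
    set L := Real.log (p n) with hLdef
    have hL2 : 2 ≤ L := le_trans (le_max_left _ _) hn
    have hLε : 1 / (2 * ε) ≤ L := le_trans (le_max_right _ _) hn
    set s := Real.sqrt (2 * L) with hs
    have hs0 : 0 ≤ s := Real.sqrt_nonneg _
    have hs2 : 2 ≤ s := by
      rw [hs, Real.le_sqrt' (by norm_num)]
      nlinarith
    set T := (1 + ε) * s with hT
    have hT2 : 2 ≤ T := by nlinarith
    have hTsq : T ^ 2 / 2 = (1 + ε) ^ 2 * L := by
      rw [hT, mul_pow, Real.sq_sqrt (by linarith : (0 : ℝ) ≤ 2 * L)]; ring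
    rw [← StrictMono.le_iff_le cdf_strictMono, hΦ n]
    have htail := tail_le hT2
    set q : ℝ := 1 / (p n : ℝ) with hq
    have hq0 : 0 < q := by rw [hq]; exact div_pos one_pos (hp0 n)
    have hq1 : q ≤ 1 := by
      rw [hq, div_le_one (hp0 n)]; exact_mod_cast hp1 n
    have h2e : 1 ≤ L * (2 * ε) := (div_le_iff₀ (by positivity)).1 hLε
    have e2 : rexp (-(T ^ 2 / 2)) ≤ rexp (-1) * q := by
      rw [hq, ← hpexp n, ← Real.exp_add]
      apply Real.exp_le_exp.2
      rw [hTsq]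
      nlinarith [hL2, hε.le, sq_nonneg ε]
    have e3 : rexp (-1) ≤ rexp (-q) := Real.exp_le_exp.2 (by linarith)
    have e4 : (1 + q) * rexp (-q) ≤ 1 := by
      have h := Real.add_one_le_exp q
      have hE := Real.exp_pos (-q)
      have hprod : rexp q * rexp (-q) = 1 := by
        rw [← Real.exp_add]; simp
      nlinarith
    have key : rexp (-q) + rexp (-(T ^ 2 / 2)) ≤ 1 := by
      nlinarith [Real.exp_pos (-q)]
    linarith
  -- lower bound
  have lower : ∀ ε : ℝ, 0 < ε → ε < 1 →
      ∀ᶠ n in atTop, (1 - ε) * Real.sqrt (2 * Real.log (p n)) ≤ x n := by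
    intro ε hε hε1
    filter_upwards [hL.eventually_ge_atTop (max (8 / ε ^ 2) (5 / ε))] with n hn
    set L := Real.log (p n) with hLdef
    have h8 : 8 / ε ^ 2 ≤ L := le_trans (le_max_left _ _) hn
    have h5 : 5 / ε ≤ L := le_trans (le_max_right _ _) hn
    have hL0 : 0 < L := lt_of_lt_of_le (by positivity) h5
    set s := Real.sqrt (2 * L) with hs
    have hs0 : 0 ≤ s := Real.sqrt_nonneg _
    set t := (1 - ε) * s with htdef
    have ht0 : 0 ≤ t := mul_nonneg (by linarith) hs0
    rw [← StrictMono.le_iff_le cdf_strictMono, hΦ n]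
    have htail := tail_ge ht0
    set q : ℝ := 1 / (p n : ℝ) with hq
    have hq0 : 0 < q := by rw [hq]; exact div_pos one_pos (hp0 n)
    have hqe : rexp (-L) = q := hpexp n
    have hone : 1 - rexp (-q) ≤ q := by
      have h := Real.add_one_le_exp (-q)
      linarith
    have hsle : s ≤ ε / 2 * L := by
      have h8' : 8 ≤ L * ε ^ 2 := (div_le_iff₀ (by positivity)).1 h8
      have h2L : 2 * L ≤ (ε / 2 * L) ^ 2 := by nlinarith
      calc s = Real.sqrt (2 * L) := hs
        _ ≤ Real.sqrt ((ε / 2 * L) ^ 2) := Real.sqrt_le_sqrt h2L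
        _ = ε / 2 * L := Real.sqrt_sq (by positivity)
    have hts : t ≤ s := by nlinarith
    have ht2 : t ^ 2 = (1 - ε) ^ 2 * (2 * L) := by
      rw [htdef, mul_pow, Real.sq_sqrt (by positivity : (0 : ℝ) ≤ 2 * L)]
    have h5' : 5 ≤ L * ε := (div_le_iff₀ hε).1 h5
    have hexp2 : 2 ≤ L - (t + 1) ^ 2 / 2 := by
      nlinarith [ht2, hts, hsle, h5', hL0.le, hε.le, hε1.le,
        mul_nonneg (mul_nonneg hε.le (by linarith : (0 : ℝ) ≤ 1 - ε)) hL0.le]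
    have hchain : Real.sqrt (2 * π) * rexp (-L) ≤ rexp (-((t + 1) ^ 2 / 2)) := by
      have h3 : Real.sqrt (2 * π) ≤ 3 := sqrt_two_pi_le
      have he2 : (3 : ℝ) ≤ rexp 2 := by
        have := Real.add_one_le_exp 2
        linarith
      calc Real.sqrt (2 * π) * rexp (-L) ≤ rexp 2 * rexp (-L) :=
            mul_le_mul_of_nonneg_right (h3.trans he2) (Real.exp_nonneg _)
        _ ≤ rexp (L - (t + 1) ^ 2 / 2) * rexp (-L) :=
            mul_le_mul_of_nonneg_right (Real.exp_le_exp.2 hexp2) (Real.exp_nonneg _)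
        _ = rexp (-((t + 1) ^ 2 / 2)) := by
            rw [← Real.exp_add]; congr 1; ring
    have hfinal : 1 - rexp (-q) ≤ (Real.sqrt (2 * π))⁻¹ * rexp (-((t + 1) ^ 2 / 2)) := by
      have hsq0 : (0 : ℝ) < Real.sqrt (2 * π) := by
        have := sqrt_two_pi_ge; linarith
      have : q ≤ (Real.sqrt (2 * π))⁻¹ * rexp (-((t + 1) ^ 2 / 2)) := by
        rw [← hqe]
        calc rexp (-L) = (Real.sqrt (2 * π))⁻¹ * (Real.sqrt (2 * π) * rexp (-L)) := by
              field_simp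
          _ ≤ (Real.sqrt (2 * π))⁻¹ * rexp (-((t + 1) ^ 2 / 2)) :=
              mul_le_mul_of_nonneg_left hchain (by positivity)
      linarith
    linarith
  -- assembly
  rw [Metric.tendsto_nhds]
  intro ε hε
  set δ := min (ε / 2) (1 / 2) with hδ
  have hδ0 : 0 < δ := lt_min (by linarith) (by norm_num)
  have hδ1 : δ < 1 := lt_of_le_of_lt (min_le_right _ _) (by norm_num)
  have hδε : δ < ε := lt_of_le_of_lt (min_le_left _ _) (by linarith)
  filter_upwards [upper δ hδ0, lower δ hδ0 hδ1, hL.eventually_ge_atTop 1] with n h1 h2 h3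
  set s := Real.sqrt (2 * Real.log (p n)) with hs
  have hs0 : 0 < s := Real.sqrt_pos.2 (by linarith)
  have hu : x n / s ≤ 1 + δ := (div_le_iff₀ hs0).2 (by linarith)
  have hl : 1 - δ ≤ x n / s := (le_div_iff₀ hs0).2 (by linarith)
  rw [Real.dist_eq]
  have habs : |x n / s - 1| ≤ δ := abs_le.2 ⟨by linarith, by linarith⟩
  exact lt_of_le_of_lt habs hδε

end
end
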